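/- arXiv:2402.14779 — 5 statements merged into one kernel-verified Lean document; each statement's English description precedes it below -/
import Mathlib

section
/- Let Ω be the closed unit ball of a norm ‖·‖ on ℝ², Ω° the ball of the dual norm, and let φ be an angle such that Q_φ ∈ ∂Ω° is a differentiability point of the dual norm ‖·‖_*. Then the angle correspondence map C_∘ satisfies C_∘(φ) = P⁻¹(d_{Q_φ}‖·‖_*), i.e., the point P_{C_∘(φ)} on ∂Ω equals the gradient of the dual norm at Q_φ. -/
open Set

/-- Let `‖·‖ = N` be a norm on `ℝ²` with unit sphere parametrized by
`P : ℝ → ∂Ω`, and let `Nd = ‖·‖_*` be its dual norm with unit sphere parametrized by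
`Q : ℝ → ∂Ω°`.  Let `C` be the angle correspondence `C_∘` (characterized by the Pythagorean
equality `⟨P (C φ), Q φ⟩ = 1`).  If `φ` is an angle such that `Q φ` is a differentiability
point of the dual norm `Nd`, with derivative `D`, then `P (C φ)` equals the gradient of the
dual norm at `Q φ`, i.e. `P (C φ) = (D (1,0), D (0,1))`. -/
theorem statement3
    (N Nd : ℝ × ℝ → ℝ)
    (hN0 : ∀ x, N x = 0 ↔ x = 0)
    (hNhom : ∀ (a : ℝ) (x : ℝ × ℝ), N (a • x) = |a| * N x)
    (hNtri : ∀ x y, N (x + y) ≤ N x + N y)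
    (hNd : ∀ p : ℝ × ℝ,
      Nd p = sSup {r : ℝ | ∃ x : ℝ × ℝ, N x ≤ 1 ∧ r = p.1 * x.1 + p.2 * x.2})
    (P Q : ℝ → ℝ × ℝ) (C : ℝ → ℝ)
    (hP : ∀ θ : ℝ, N (P θ) = 1)
    (hQ : ∀ φ : ℝ, Nd (Q φ) = 1)
    (hC : ∀ φ : ℝ, (P (C φ)).1 * (Q φ).1 + (P (C φ)).2 * (Q φ).2 = 1)
    (φ : ℝ) (D : (ℝ × ℝ) →L[ℝ] ℝ) (hD : HasFDerivAt Nd D (Q φ)) :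
    P (C φ) = (D (1, 0), D (0, 1)) := by
  set x := P (C φ) with hx
  set q := Q φ with hq
  -- nonnegativity of N
  have hN0' : N 0 = 0 := (hN0 0).mpr rfl
  have hNneg : ∀ z, N (-z) = N z := by
    intro z
    have := hNhom (-1) z
    simpa using this
  have hNnonneg : ∀ z, 0 ≤ N z := by
    intro z
    have h := hNtri z (-z)
    rw [add_neg_cancel, hN0', hNneg] at h
    linarith
  -- norms bounded below: ∃ m > 0, ∀ y, m * ‖y‖ ≤ N y
  have hub : ∀ z : ℝ × ℝ, N z ≤ (N (1,0) + N (0,1)) * ‖z‖ := by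
    intro z
    have hz : z = z.1 • ((1:ℝ),(0:ℝ)) + z.2 • ((0:ℝ),(1:ℝ)) := by
      ext <;> simp
    calc N z ≤ N (z.1 • ((1:ℝ),(0:ℝ))) + N (z.2 • ((0:ℝ),(1:ℝ))) := by
          nth_rewrite 1 [hz]; exact hNtri _ _
      _ = |z.1| * N (1,0) + |z.2| * N (0,1) := by rw [hNhom, hNhom]
      _ ≤ ‖z‖ * N (1,0) + ‖z‖ * N (0,1) := by
          gcongr
          · exact hNnonneg _
          · simpa using norm_fst_le z
          · exact hNnonneg _
          · simpa using norm_snd_le z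
      _ = (N (1,0) + N (0,1)) * ‖z‖ := by ring
  have hlip : LipschitzWith (Real.toNNReal (N (1,0) + N (0,1))) N := by
    apply LipschitzWith.of_dist_le_mul
    intro a b
    rw [Real.dist_eq, dist_eq_norm]
    have h1 : N a - N b ≤ N (a - b) := by
      have := hNtri (a - b) b
      simpa using this
    have h2 : N b - N a ≤ N (a - b) := by
      have := hNtri (b - a) a
      rw [← hNneg (b - a)] at this
      simp only [neg_sub] at this
      simpa using this
    have : |N a - N b| ≤ N (a - b) := abs_le.mpr ⟨by linarith, h1⟩
    calc |N a - N b| ≤ N (a - b) := this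
      _ ≤ (N (1,0) + N (0,1)) * ‖a - b‖ := hub _
      _ ≤ Real.toNNReal (N (1,0) + N (0,1)) * ‖a - b‖ := by
          gcongr
          exact Real.le_coe_toNNReal _
  have hcont : Continuous N := hlip.continuous
  obtain ⟨z0, hz0mem, hz0min'⟩ :=
    (isCompact_sphere (0 : ℝ × ℝ) 1).exists_isMinOn
      ⟨((1:ℝ),(0:ℝ)), by simp [Prod.norm_def]⟩ hcont.continuousOn
  have hz0min : ∀ y ∈ Metric.sphere (0 : ℝ × ℝ) 1, N z0 ≤ N y := fun y hy => hz0min' hy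
  have hz0ne : z0 ≠ 0 := by
    intro h
    rw [mem_sphere_iff_norm, h] at hz0mem
    simp at hz0mem
  have hm : 0 < N z0 := lt_of_le_of_ne (hNnonneg _) (fun h => hz0ne ((hN0 z0).mp h.symm))
  have hlow : ∀ y : ℝ × ℝ, N z0 * ‖y‖ ≤ N y := by
    intro y
    rcases eq_or_ne y 0 with rfl | hy
    · simp [hN0']
    · have hny : (0:ℝ) < ‖y‖ := norm_pos_iff.mpr hy
      have hmem : ‖y‖⁻¹ • y ∈ Metric.sphere (0 : ℝ × ℝ) 1 := by
        rw [mem_sphere_iff_norm, sub_zero, norm_smul]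
        simp [abs_of_pos (inv_pos.mpr hny), inv_mul_cancel₀ hny.ne']
      have := hz0min _ hmem
      have h2 : N (‖y‖⁻¹ • y) = ‖y‖⁻¹ * N y := by
        rw [hNhom, abs_of_pos (inv_pos.mpr hny)]
      rw [h2] at this
      calc N z0 * ‖y‖ ≤ (‖y‖⁻¹ * N y) * ‖y‖ := by gcongr
        _ = N y := by field_simp
  -- the linear functional L p = ⟨p, x⟩ is ≤ Nd
  have hNx : N x = 1 := hP _
  have hbdd : ∀ p : ℝ × ℝ, BddAbove {r : ℝ | ∃ y : ℝ × ℝ, N y ≤ 1 ∧ r = p.1 * y.1 + p.2 * y.2} := by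
    intro p
    refine ⟨(|p.1| + |p.2|) / N z0, ?_⟩
    rintro r ⟨y, hy1, rfl⟩
    have hy : ‖y‖ ≤ 1 / N z0 := by
      rw [le_div_iff₀ hm, mul_comm]
      exact (hlow y).trans hy1
    have h1 : |y.1| ≤ 1 / N z0 := le_trans (by simpa using norm_fst_le y) hy
    have h2 : |y.2| ≤ 1 / N z0 := le_trans (by simpa using norm_snd_le y) hy
    calc p.1 * y.1 + p.2 * y.2 ≤ |p.1 * y.1| + |p.2 * y.2| := by
          exact (le_abs_self _).trans (abs_add_le _ _)
      _ = |p.1| * |y.1| + |p.2| * |y.2| := by rw [abs_mul, abs_mul]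
      _ ≤ |p.1| * (1 / N z0) + |p.2| * (1 / N z0) := by gcongr
      _ = (|p.1| + |p.2|) / N z0 := by ring
  have hLle : ∀ p : ℝ × ℝ, p.1 * x.1 + p.2 * x.2 ≤ Nd p := by
    intro p
    rw [hNd]
    exact le_csSup (hbdd p) ⟨x, hNx.le, rfl⟩
  -- key derivative argument
  have key : ∀ v : ℝ × ℝ, D v = v.1 * x.1 + v.2 * x.2 := by
    intro v
    set c : ℝ := v.1 * x.1 + v.2 * x.2 with hc
    have hmin : IsLocalMin (fun t : ℝ => Nd (q + t • v) - t * c) 0 := by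
      apply IsMinOn.isLocalMin _ (Filter.univ_mem)
      intro t _
      simp only
      have h1 : (q + t • v).1 * x.1 + (q + t • v).2 * x.2 ≤ Nd (q + t • v) := hLle _
      have h2 : q.1 * x.1 + q.2 * x.2 = 1 := by rw [hx, hq]; linarith [hC φ]
      have h0 : Nd q = 1 := hQ φ
      simp only [Prod.fst_add, Prod.snd_add, Prod.smul_fst, Prod.smul_snd, smul_eq_mul] at h1
      have h3 : 1 + t * c ≤ Nd (q + t • v) := by rw [hc]; nlinarith [h1, h2]
      simp only [zero_smul, add_zero, zero_mul, sub_zero, h0]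
      simp only [Set.mem_setOf_eq]
      linarith [h3]
    have hderiv : HasDerivAt (fun t : ℝ => Nd (q + t • v) - t * c) (D v - c) 0 := by
      have hinner : HasDerivAt (fun t : ℝ => q + t • v) v 0 := by
        simpa using ((hasDerivAt_id (0:ℝ)).smul_const v).const_add q
      have hD' : HasFDerivAt Nd D (q + (0:ℝ) • v) := by simpa using hD
      have h1 : HasDerivAt (fun t : ℝ => Nd (q + t • v)) (D v) 0 := by
        have := hD'.comp_hasDerivAt 0 hinner
        exact this
      exact h1.sub (hasDerivAt_mul_const c)
    have := hmin.hasDerivAt_eq_zero hderiv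
    linarith [this, sub_eq_zero.mp this]
  have k1 := key (1, 0)
  have k2 := key (0, 1)
  simp only at k1 k2
  ext
  · simp [k1]
  · simp [k2]
end

section
/- For α ≥ 2 define P_α(s) = (1/(α²(α²−1)))·(|1+s|^{2α} − α²|1+s|^α(1+s) + 2(α²−1)|1+s|^α − α²|1+s|^{α−2}(1+s) + 1) for s ∈ ℝ. Then P_α(s) ≥ 0 for all s, and P_α(s) = 0 if and only if s = 0. -/
/-- The function `P_α` of the paper:
`P_α(s) = (1/(α²(α²−1)))(|1+s|^{2α} − α²|1+s|^α(1+s) + 2(α²−1)|1+s|^α − α²|1+s|^{α−2}(1+s) + 1)`. -/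
noncomputable def Pfun (α s : ℝ) : ℝ :=
  (1 / (α ^ 2 * (α ^ 2 - 1))) *
    (|1 + s| ^ (2 * α) - α ^ 2 * |1 + s| ^ α * (1 + s) + 2 * (α ^ 2 - 1) * |1 + s| ^ α -
      α ^ 2 * |1 + s| ^ (α - 2) * (1 + s) + 1)

open Real Set

private noncomputable def efun (α y : ℝ) : ℝ :=
  2 * y ^ (α + 1) - α * (α + 1) * (y * y) + 2 * (α ^ 2 - 1) * y - α * (α - 1)

private noncomputable def dfun (α y : ℝ) : ℝ :=
  y ^ (2 * α) - α ^ 2 * y ^ (α + 1) + 2 * (α ^ 2 - 1) * y ^ α - α ^ 2 * y ^ (α - 1) + 1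

private lemma bern (α : ℝ) (hα : 2 ≤ α) {y : ℝ} (hy : 0 ≤ y) (hy1 : y ≠ 1) :
    α * y - (α - 1) < y ^ α := by
  have h := one_add_mul_self_lt_rpow_one_add (s := y - 1) (by linarith)
    (fun h => hy1 (by linarith)) (p := α) (by linarith)
  rw [show (1:ℝ) + (y - 1) = y by ring] at h
  linarith

private lemma efun_hasDeriv (α : ℝ) (hα : 2 ≤ α) (y : ℝ) :
    HasDerivAt (efun α) (2 * (α + 1) * (y ^ α - α * y + (α - 1))) y := by
  have h1 : HasDerivAt (fun x : ℝ => x ^ (α + 1)) ((α + 1) * y ^ α) y := by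
    have := Real.hasDerivAt_rpow_const (x := y) (p := α + 1) (Or.inr (by linarith))
    simpa [show α + 1 - 1 = α by ring] using this
  have h2 : HasDerivAt (fun x : ℝ => x * x) (1 * y + y * 1) y :=
    (hasDerivAt_id y).mul (hasDerivAt_id y)
  have hD := (((h1.const_mul 2).sub (h2.const_mul (α * (α + 1)))).add
      ((hasDerivAt_id y).const_mul (2 * (α ^ 2 - 1)))).sub_const (α * (α - 1))
  have hfe : efun α = fun x : ℝ =>
      2 * x ^ (α + 1) - α * (α + 1) * (x * x) + 2 * (α ^ 2 - 1) * x - α * (α - 1) := by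
    funext x; simp [efun]
  rw [hfe]
  refine hD.congr_deriv ?_
  ring

private lemma efun_one (α : ℝ) : efun α 1 = 0 := by
  simp [efun, Real.one_rpow]; ring

private lemma efun_cont (α : ℝ) (hα : 2 ≤ α) : Continuous (efun α) :=
  continuous_iff_continuousAt.2 fun y => (efun_hasDeriv α hα y).continuousAt

private lemma efun_pos (α : ℝ) (hα : 2 ≤ α) {y : ℝ} (hy : 1 < y) : 0 < efun α y := by
  have mono := strictMonoOn_of_deriv_pos (convex_Ici 1) (efun_cont α hα).continuousOn
    (f := efun α) ?_
  · have := mono (self_mem_Ici) (le_of_lt hy) hy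
    rw [efun_one] at this; exact this
  · intro x hx
    rw [interior_Ici, mem_Ioi] at hx
    rw [(efun_hasDeriv α hα x).deriv]
    have hb := bern α hα (by linarith : (0:ℝ) ≤ x) (ne_of_gt hx)
    nlinarith

private lemma efun_neg (α : ℝ) (hα : 2 ≤ α) {y : ℝ} (hy : 0 ≤ y) (hy1 : y < 1) :
    efun α y < 0 := by
  have mono := strictMonoOn_of_deriv_pos (convex_Icc 0 1) (efun_cont α hα).continuousOn
    (f := efun α) ?_
  · have := mono (Set.mem_Icc.2 ⟨hy, le_of_lt hy1⟩) (Set.mem_Icc.2 ⟨zero_le_one, le_refl 1⟩) hy1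
    rw [efun_one] at this; exact this
  · intro x hx
    rw [interior_Icc, mem_Ioo] at hx
    rw [(efun_hasDeriv α hα x).deriv]
    have hb := bern α hα (le_of_lt hx.1) (ne_of_lt hx.2)
    nlinarith

private lemma dfun_hasDeriv (α : ℝ) (hα : 2 ≤ α) {y : ℝ} (hy : 0 < y) :
    HasDerivAt (dfun α) (α * y ^ (α - 2) * efun α y) y := by
  have hne : y ≠ 0 := ne_of_gt hy
  have h1 : HasDerivAt (fun x : ℝ => x ^ (2 * α)) (2 * α * y ^ (2 * α - 1)) y := by
    simpa using Real.hasDerivAt_rpow_const (x := y) (p := 2 * α) (Or.inl hne)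
  have h2 : HasDerivAt (fun x : ℝ => x ^ (α + 1)) ((α + 1) * y ^ α) y := by
    have := Real.hasDerivAt_rpow_const (x := y) (p := α + 1) (Or.inl hne)
    simpa [show α + 1 - 1 = α by ring] using this
  have h3 : HasDerivAt (fun x : ℝ => x ^ α) (α * y ^ (α - 1)) y :=
    Real.hasDerivAt_rpow_const (Or.inl hne)
  have h4 : HasDerivAt (fun x : ℝ => x ^ (α - 1)) ((α - 1) * y ^ (α - 2)) y := by
    have := Real.hasDerivAt_rpow_const (x := y) (p := α - 1) (Or.inl hne)
    simpa [show α - 1 - 1 = α - 2 by ring] using this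
  have hD := (((h1.sub (h2.const_mul (α ^ 2))).add (h3.const_mul (2 * (α ^ 2 - 1)))).sub
      (h4.const_mul (α ^ 2))).add_const 1
  have ha : y ^ (α - 2) * y = y ^ (α - 1) := by
    have := Real.rpow_add hy (α - 2) 1
    rw [Real.rpow_one] at this
    rw [← this, show α - 2 + 1 = α - 1 by ring]
  have hb : y ^ (α - 1) * y = y ^ α := by
    have := Real.rpow_add hy (α - 1) 1
    rw [Real.rpow_one] at this
    rw [← this, show α - 1 + 1 = α by ring]
  have hc : y ^ (α - 2) * y ^ (α + 1) = y ^ (2 * α - 1) := by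
    rw [← Real.rpow_add hy, show α - 2 + (α + 1) = 2 * α - 1 by ring]
  have hfd : dfun α = fun x : ℝ =>
      x ^ (2 * α) - α ^ 2 * x ^ (α + 1) + 2 * (α ^ 2 - 1) * x ^ α - α ^ 2 * x ^ (α - 1) + 1 := by
    funext x; simp [dfun]
  rw [hfd]
  refine hD.congr_deriv (Eq.symm ?_)
  simp only [efun]
  linear_combination (2 * α) * hc + (-(α ^ 2 * (α + 1))) * hb +
    (-(α ^ 2 * (α + 1)) * y + 2 * α * (α ^ 2 - 1)) * ha

private lemma dfun_one (α : ℝ) : dfun α 1 = 0 := by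
  simp [dfun, Real.one_rpow]; ring

private lemma dfun_cont (α : ℝ) (hα : 2 ≤ α) : Continuous (dfun α) := by
  have c : ∀ p : ℝ, 0 ≤ p → Continuous fun x : ℝ => x ^ p := fun p hp =>
    continuous_iff_continuousAt.2 fun x => Real.continuousAt_rpow_const x p (Or.inr hp)
  exact ((((c (2*α) (by linarith)).sub (continuous_const.mul (c (α+1) (by linarith)))).add
    (continuous_const.mul (c α (by linarith)))).sub
    (continuous_const.mul (c (α-1) (by linarith)))).add continuous_const

private lemma dfun_pos (α : ℝ) (hα : 2 ≤ α) {y : ℝ} (hy : 0 < y) (hy1 : y ≠ 1) :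
    0 < dfun α y := by
  have hα0 : (0:ℝ) < α := by linarith
  rcases lt_or_gt_of_ne hy1 with h | h
  · have anti := strictAntiOn_of_deriv_neg (convex_Icc 0 1) (dfun_cont α hα).continuousOn
      (f := dfun α) ?_
    · have := anti (Set.mem_Icc.2 ⟨le_of_lt hy, le_of_lt h⟩)
        (Set.mem_Icc.2 ⟨zero_le_one, le_refl 1⟩) h
      rwa [dfun_one] at this
    · intro x hx
      rw [interior_Icc, mem_Ioo] at hx
      rw [(dfun_hasDeriv α hα hx.1).deriv]
      exact mul_neg_of_pos_of_neg (mul_pos hα0 (Real.rpow_pos_of_pos hx.1 _))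
        (efun_neg α hα (le_of_lt hx.1) hx.2)
  · have mono := strictMonoOn_of_deriv_pos (convex_Ici 1) (dfun_cont α hα).continuousOn
      (f := dfun α) ?_
    · have := mono self_mem_Ici (le_of_lt h) h
      rwa [dfun_one] at this
    · intro x hx
      rw [interior_Ici, mem_Ioi] at hx
      rw [(dfun_hasDeriv α hα (by linarith : (0:ℝ) < x)).deriv]
      exact mul_pos (mul_pos hα0 (Real.rpow_pos_of_pos (by linarith) _))
        (efun_pos α hα hx)

private lemma num_pos (α : ℝ) (hα : 2 ≤ α) {s : ℝ} (hs : s ≠ 0) :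
    0 < |1 + s| ^ (2 * α) - α ^ 2 * |1 + s| ^ α * (1 + s) + 2 * (α ^ 2 - 1) * |1 + s| ^ α -
      α ^ 2 * |1 + s| ^ (α - 2) * (1 + s) + 1 := by
  set x := 1 + s with hx
  have hx1 : x ≠ 1 := fun h => hs (by linarith [h])
  rcases le_or_gt x 0 with hneg | hpos
  · have h1 : (0:ℝ) ≤ |x| ^ (2 * α) := Real.rpow_nonneg (abs_nonneg x) _
    have h2 : α ^ 2 * |x| ^ α * x ≤ 0 :=
      mul_nonpos_of_nonneg_of_nonpos
        (mul_nonneg (by positivity) (Real.rpow_nonneg (abs_nonneg x) _)) hneg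
    have h3 : (0:ℝ) ≤ 2 * (α ^ 2 - 1) * |x| ^ α :=
      mul_nonneg (by nlinarith) (Real.rpow_nonneg (abs_nonneg x) _)
    have h4 : α ^ 2 * |x| ^ (α - 2) * x ≤ 0 :=
      mul_nonpos_of_nonneg_of_nonpos
        (mul_nonneg (by positivity) (Real.rpow_nonneg (abs_nonneg x) _)) hneg
    linarith
  · have habs : |x| = x := abs_of_pos hpos
    have ha : x ^ α * x = x ^ (α + 1) := by
      have := Real.rpow_add hpos α 1
      rw [Real.rpow_one] at this
      rw [← this]
    have hb : x ^ (α - 2) * x = x ^ (α - 1) := by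
      have := Real.rpow_add hpos (α - 2) 1
      rw [Real.rpow_one] at this
      rw [← this, show α - 2 + 1 = α - 1 by ring]
    have hd := dfun_pos α hα hpos hx1
    simp only [dfun] at hd
    rw [habs]
    nlinarith [ha, hb]

/-- For every real `α ≥ 2`, the function `P_α` is non-negative on `ℝ`,
and `P_α(s) = 0` if and only if `s = 0`. -/
theorem statement10 (α : ℝ) (hα : 2 ≤ α) :
    ∀ s : ℝ, 0 ≤ Pfun α s ∧ (Pfun α s = 0 ↔ s = 0) := by
  intro s
  have hc : (0:ℝ) < 1 / (α ^ 2 * (α ^ 2 - 1)) := by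
    have h4 : (4:ℝ) ≤ α ^ 2 := by nlinarith
    have : (0:ℝ) < α ^ 2 * (α ^ 2 - 1) := by nlinarith
    exact one_div_pos.mpr this
  have hzero : Pfun α 0 = 0 := by
    simp only [Pfun, add_zero, abs_one, Real.one_rpow]
    ring
  rcases eq_or_ne s 0 with rfl | hs
  · exact ⟨le_of_eq hzero.symm, by simp [hzero]⟩
  · have hpos : 0 < Pfun α s := mul_pos hc (num_pos α hα hs)
    exact ⟨le_of_lt hpos, ⟨fun h => absurd h (ne_of_gt hpos), fun h => absurd h hs⟩⟩
end

section
/- For α ≥ 2 and P_α as above, the following limits hold: lim_{s→0} s·∂_sP_α(s)/P_α(s) = 4, and lim_{s→+∞} s·∂_sP_α(s)/P_α(s) = lim_{s→−∞} s·∂_sP_α(s)/P_α(s) = 2α. -/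
open Filter Topology

/-- The derivative `∂_s P_α`. -/
noncomputable def dPfun (α s : ℝ) : ℝ :=
  (2 / (α * (α ^ 2 - 1))) * |1 + s| ^ (α - 2) *
    (|1 + s| ^ α * (1 + s) - 1 - (α + 1) * s - (α * (α + 1) / 2) * s ^ 2)

namespace Stmt12Aux

open Set

lemma opow_hasDeriv (β : ℝ) {s : ℝ} (hs : 1 + s ≠ 0) :
    HasDerivAt (fun t : ℝ => (1 + t) ^ β) (β * (1 + s) ^ (β - 1)) s := by
  have h1 : HasDerivAt (fun t : ℝ => 1 + t) 1 s := (hasDerivAt_id s).const_add 1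
  have h2 := (Real.hasDerivAt_rpow_const (p := β) (Or.inl hs)).comp s h1
  simpa [Function.comp_def] using h2

lemma opow_tendsto (β : ℝ) : Tendsto (fun s : ℝ => (1 + s) ^ β) (𝓝 (0:ℝ)) (𝓝 1) := by
  have h : ContinuousAt (fun x : ℝ => x ^ β) 1 :=
    Real.continuousAt_rpow_const 1 β (Or.inl one_ne_zero)
  have h2 : Tendsto (fun s : ℝ => 1 + s) (𝓝 (0:ℝ)) (𝓝 1) := by
    have : Continuous (fun s : ℝ => 1 + s) := continuous_const.add continuous_id
    simpa using this.tendsto (0:ℝ)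
  have := h.tendsto.comp h2
  simpa [Function.comp_def, Real.one_rpow] using this

noncomputable def N0 (α s : ℝ) : ℝ := (1+s)^(α+1) - 1 - (α+1)*s - α*(α+1)/2*s^2
noncomputable def N1 (α s : ℝ) : ℝ := (α+1)*(1+s)^(α+1-1) - (α+1) - α*(α+1)*s
noncomputable def N2 (α s : ℝ) : ℝ := (α+1)*(α+1-1)*(1+s)^(α+1-1-1) - α*(α+1)
noncomputable def N3 (α s : ℝ) : ℝ := (α+1)*(α+1-1)*(α+1-1-1)*(1+s)^(α+1-1-1-1)

lemma N0_deriv (α : ℝ) {s : ℝ} (hs : 1 + s ≠ 0) : HasDerivAt (N0 α) (N1 α s) s := by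
  unfold N0 N1
  have h := (((opow_hasDeriv (α+1) hs).sub_const 1).sub
      ((hasDerivAt_id s).const_mul (α+1))).sub
      (((hasDerivAt_pow 2 s)).const_mul (α*(α+1)/2))
  refine h.congr_deriv ?_
  push_cast
  ring

lemma N1_deriv (α : ℝ) {s : ℝ} (hs : 1 + s ≠ 0) : HasDerivAt (N1 α) (N2 α s) s := by
  unfold N1 N2
  have h := (((opow_hasDeriv (α+1-1) hs).const_mul (α+1)).sub_const (α+1)).sub
      ((hasDerivAt_id s).const_mul (α*(α+1)))
  refine h.congr_deriv ?_
  ring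

lemma N2_deriv (α : ℝ) {s : ℝ} (hs : 1 + s ≠ 0) : HasDerivAt (N2 α) (N3 α s) s := by
  unfold N2 N3
  have h := ((opow_hasDeriv (α+1-1-1) hs).const_mul ((α+1)*(α+1-1))).sub_const (α*(α+1))
  refine h.congr_deriv ?_
  ring

noncomputable def F0 (α s : ℝ) : ℝ :=
  (1+s)^(2*α) - α^2*(1+s)^(α+1) + 2*(α^2-1)*(1+s)^α - α^2*(1+s)^(α-1) + 1
noncomputable def F1 (α s : ℝ) : ℝ :=
  2*α*(1+s)^(2*α-1) - α^2*(α+1)*(1+s)^(α+1-1) + 2*(α^2-1)*α*(1+s)^(α-1)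
    - α^2*(α-1)*(1+s)^(α-1-1)
noncomputable def F2 (α s : ℝ) : ℝ :=
  2*α*(2*α-1)*(1+s)^(2*α-1-1) - α^2*(α+1)*(α+1-1)*(1+s)^(α+1-1-1)
    + 2*(α^2-1)*α*(α-1)*(1+s)^(α-1-1) - α^2*(α-1)*(α-1-1)*(1+s)^(α-1-1-1)
noncomputable def F3 (α s : ℝ) : ℝ :=
  2*α*(2*α-1)*(2*α-1-1)*(1+s)^(2*α-1-1-1) - α^2*(α+1)*(α+1-1)*(α+1-1-1)*(1+s)^(α+1-1-1-1)
    + 2*(α^2-1)*α*(α-1)*(α-1-1)*(1+s)^(α-1-1-1)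
    - α^2*(α-1)*(α-1-1)*(α-1-1-1)*(1+s)^(α-1-1-1-1)
noncomputable def F4 (α s : ℝ) : ℝ :=
  2*α*(2*α-1)*(2*α-1-1)*(2*α-1-1-1)*(1+s)^(2*α-1-1-1-1)
    - α^2*(α+1)*(α+1-1)*(α+1-1-1)*(α+1-1-1-1)*(1+s)^(α+1-1-1-1-1)
    + 2*(α^2-1)*α*(α-1)*(α-1-1)*(α-1-1-1)*(1+s)^(α-1-1-1-1)
    - α^2*(α-1)*(α-1-1)*(α-1-1-1)*(α-1-1-1-1)*(1+s)^(α-1-1-1-1-1)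

lemma F0_deriv (α : ℝ) {s : ℝ} (hs : 1 + s ≠ 0) : HasDerivAt (F0 α) (F1 α s) s := by
  unfold F0 F1
  have h := ((((opow_hasDeriv (2*α) hs).sub ((opow_hasDeriv (α+1) hs).const_mul (α^2))).add
      ((opow_hasDeriv α hs).const_mul (2*(α^2-1)))).sub
      ((opow_hasDeriv (α-1) hs).const_mul (α^2))).add_const 1
  refine h.congr_deriv ?_
  ring

lemma F1_deriv (α : ℝ) {s : ℝ} (hs : 1 + s ≠ 0) : HasDerivAt (F1 α) (F2 α s) s := by
  unfold F1 F2
  have h := ((((opow_hasDeriv (2*α-1) hs).const_mul (2*α)).sub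
      ((opow_hasDeriv (α+1-1) hs).const_mul (α^2*(α+1)))).add
      ((opow_hasDeriv (α-1) hs).const_mul (2*(α^2-1)*α))).sub
      ((opow_hasDeriv (α-1-1) hs).const_mul (α^2*(α-1)))
  refine h.congr_deriv ?_
  ring

lemma F2_deriv (α : ℝ) {s : ℝ} (hs : 1 + s ≠ 0) : HasDerivAt (F2 α) (F3 α s) s := by
  unfold F2 F3
  have h := ((((opow_hasDeriv (2*α-1-1) hs).const_mul (2*α*(2*α-1))).sub
      ((opow_hasDeriv (α+1-1-1) hs).const_mul (α^2*(α+1)*(α+1-1)))).add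
      ((opow_hasDeriv (α-1-1) hs).const_mul (2*(α^2-1)*α*(α-1)))).sub
      ((opow_hasDeriv (α-1-1-1) hs).const_mul (α^2*(α-1)*(α-1-1)))
  refine h.congr_deriv ?_
  ring

lemma F3_deriv (α : ℝ) {s : ℝ} (hs : 1 + s ≠ 0) : HasDerivAt (F3 α) (F4 α s) s := by
  unfold F3 F4
  have h := ((((opow_hasDeriv (2*α-1-1-1) hs).const_mul (2*α*(2*α-1)*(2*α-1-1))).sub
      ((opow_hasDeriv (α+1-1-1-1) hs).const_mul (α^2*(α+1)*(α+1-1)*(α+1-1-1)))).add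
      ((opow_hasDeriv (α-1-1-1) hs).const_mul (2*(α^2-1)*α*(α-1)*(α-1-1)))).sub
      ((opow_hasDeriv (α-1-1-1-1) hs).const_mul (α^2*(α-1)*(α-1-1)*(α-1-1-1)))
  refine h.congr_deriv ?_
  ring

lemma lin_tendsto (c : ℝ) : Tendsto (fun s : ℝ => c*s) (𝓝 (0:ℝ)) (𝓝 0) := by
  have h : Continuous (fun s : ℝ => c*s) := by fun_prop
  simpa using h.tendsto 0

lemma sq_tendsto (c : ℝ) : Tendsto (fun s : ℝ => c*s^2) (𝓝 (0:ℝ)) (𝓝 0) := by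
  have h : Continuous (fun s : ℝ => c*s^2) := by fun_prop
  simpa using h.tendsto 0

lemma tN0 (α : ℝ) : Tendsto (N0 α) (𝓝 (0:ℝ)) (𝓝 0) := by
  unfold N0
  have h := (((opow_tendsto (α+1)).sub_const 1).sub (lin_tendsto (α+1))).sub
    (sq_tendsto (α*(α+1)/2))
  simpa using h

lemma tN1 (α : ℝ) : Tendsto (N1 α) (𝓝 (0:ℝ)) (𝓝 0) := by
  unfold N1
  have h := (((opow_tendsto (α+1-1)).const_mul (α+1)).sub_const (α+1)).sub
    (lin_tendsto (α*(α+1)))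
  convert h using 2
  ring

lemma tN2 (α : ℝ) : Tendsto (N2 α) (𝓝 (0:ℝ)) (𝓝 0) := by
  unfold N2
  have h := ((opow_tendsto (α+1-1-1)).const_mul ((α+1)*(α+1-1))).sub_const (α*(α+1))
  convert h using 2
  ring

lemma tN3 (α : ℝ) : Tendsto (N3 α) (𝓝 (0:ℝ)) (𝓝 (α*(α+1)*(α-1))) := by
  unfold N3
  have h := (opow_tendsto (α+1-1-1-1)).const_mul ((α+1)*(α+1-1)*(α+1-1-1))
  convert h using 2
  ring

lemma tF0 (α : ℝ) : Tendsto (F0 α) (𝓝 (0:ℝ)) (𝓝 0) := by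
  unfold F0
  have h := ((((opow_tendsto (2*α)).sub ((opow_tendsto (α+1)).const_mul (α^2))).add
    ((opow_tendsto α).const_mul (2*(α^2-1)))).sub
    ((opow_tendsto (α-1)).const_mul (α^2))).add_const 1
  convert h using 2
  ring

lemma tF1 (α : ℝ) : Tendsto (F1 α) (𝓝 (0:ℝ)) (𝓝 0) := by
  unfold F1
  have h := ((((opow_tendsto (2*α-1)).const_mul (2*α)).sub
    ((opow_tendsto (α+1-1)).const_mul (α^2*(α+1)))).add
    ((opow_tendsto (α-1)).const_mul (2*(α^2-1)*α))).sub
    ((opow_tendsto (α-1-1)).const_mul (α^2*(α-1)))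
  convert h using 2
  ring

lemma tF2 (α : ℝ) : Tendsto (F2 α) (𝓝 (0:ℝ)) (𝓝 0) := by
  unfold F2
  have h := ((((opow_tendsto (2*α-1-1)).const_mul (2*α*(2*α-1))).sub
    ((opow_tendsto (α+1-1-1)).const_mul (α^2*(α+1)*(α+1-1)))).add
    ((opow_tendsto (α-1-1)).const_mul (2*(α^2-1)*α*(α-1)))).sub
    ((opow_tendsto (α-1-1-1)).const_mul (α^2*(α-1)*(α-1-1)))
  convert h using 2
  ring

lemma tF3 (α : ℝ) : Tendsto (F3 α) (𝓝 (0:ℝ)) (𝓝 0) := by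
  unfold F3
  have h := ((((opow_tendsto (2*α-1-1-1)).const_mul (2*α*(2*α-1)*(2*α-1-1))).sub
    ((opow_tendsto (α+1-1-1-1)).const_mul (α^2*(α+1)*(α+1-1)*(α+1-1-1)))).add
    ((opow_tendsto (α-1-1-1)).const_mul (2*(α^2-1)*α*(α-1)*(α-1-1)))).sub
    ((opow_tendsto (α-1-1-1-1)).const_mul (α^2*(α-1)*(α-1-1)*(α-1-1-1)))
  convert h using 2
  ring

lemma tF4 (α : ℝ) : Tendsto (F4 α) (𝓝 (0:ℝ)) (𝓝 (2*α^2*(α^2-1))) := by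
  unfold F4
  have h := ((((opow_tendsto (2*α-1-1-1-1)).const_mul (2*α*(2*α-1)*(2*α-1-1)*(2*α-1-1-1))).sub
    ((opow_tendsto (α+1-1-1-1-1)).const_mul (α^2*(α+1)*(α+1-1)*(α+1-1-1)*(α+1-1-1-1)))).add
    ((opow_tendsto (α-1-1-1-1)).const_mul (2*(α^2-1)*α*(α-1)*(α-1-1)*(α-1-1-1)))).sub
    ((opow_tendsto (α-1-1-1-1-1)).const_mul (α^2*(α-1)*(α-1-1)*(α-1-1-1)*(α-1-1-1-1)))
  convert h using 2
  ring

lemma hx_ev : ∀ᶠ s : ℝ in 𝓝[≠] (0:ℝ), 1 + s ≠ 0 := by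
  apply eventually_nhdsWithin_of_eventually_nhds
  have h : ∀ᶠ s : ℝ in 𝓝 0, s ∈ Ioo (-(1:ℝ)/2) (1/2) :=
    Ioo_mem_nhds (by norm_num) (by norm_num)
  filter_upwards [h] with s hs
  simp only [Set.mem_Ioo] at hs
  intro hc
  linarith [hs.1]

lemma hs_ne : ∀ᶠ s : ℝ in 𝓝[≠] (0:ℝ), s ≠ 0 := eventually_mem_nhdsWithin

lemma pow_tendsto_zero (n : ℕ) (hn : 0 < n) :
    Tendsto (fun s : ℝ => s^n) (𝓝[≠] (0:ℝ)) (𝓝 0) := by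
  have h : Continuous (fun s : ℝ => s^n) := by fun_prop
  have := (h.tendsto 0).mono_left (nhdsWithin_le_nhds (s := {(0:ℝ)}ᶜ))
  simpa [zero_pow hn.ne'] using this

lemma partB (α : ℝ) :
    Tendsto (fun s : ℝ => N0 α s / s^3) (𝓝[≠] (0:ℝ)) (𝓝 (α*(α+1)*(α-1)/6)) := by
  have L3 : Tendsto (fun s : ℝ => N3 α s / 6) (𝓝[≠] (0:ℝ)) (𝓝 (α*(α+1)*(α-1)/6)) :=
    ((tN3 α).div_const 6).mono_left nhdsWithin_le_nhds
  have L2 : Tendsto (fun s : ℝ => N2 α s / (6*s)) (𝓝[≠] (0:ℝ)) (𝓝 (α*(α+1)*(α-1)/6)) := by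
    apply HasDerivAt.lhopital_zero_nhdsNE
      (f' := fun s => N3 α s) (g' := fun _ => (6:ℝ))
      (hx_ev.mono fun s hs => N2_deriv α hs)
      (Eventually.of_forall fun s => by
        simpa using (hasDerivAt_id s).const_mul (6:ℝ))
      (Eventually.of_forall fun s => by norm_num)
      ((tN2 α).mono_left nhdsWithin_le_nhds)
      (by
        have : Tendsto (fun s : ℝ => 6*s) (𝓝 (0:ℝ)) (𝓝 0) := by
          have h : Continuous (fun s : ℝ => 6*s) := by fun_prop
          simpa using h.tendsto 0
        exact this.mono_left nhdsWithin_le_nhds)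
      L3
  have L1 : Tendsto (fun s : ℝ => N1 α s / (3*s^2)) (𝓝[≠] (0:ℝ)) (𝓝 (α*(α+1)*(α-1)/6)) := by
    apply HasDerivAt.lhopital_zero_nhdsNE
      (f' := fun s => N2 α s) (g' := fun s => 6*s)
      (hx_ev.mono fun s hs => N1_deriv α hs)
      (Eventually.of_forall fun s => by
        have := (hasDerivAt_pow 2 s).const_mul (3:ℝ)
        refine this.congr_deriv ?_
        push_cast
        ring)
      (hs_ne.mono fun s hs => by
        exact mul_ne_zero (by norm_num) hs)
      ((tN1 α).mono_left nhdsWithin_le_nhds)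
      (by
        have : Tendsto (fun s : ℝ => 3*s^2) (𝓝 (0:ℝ)) (𝓝 0) := by
          have h : Continuous (fun s : ℝ => 3*s^2) := by fun_prop
          simpa using h.tendsto 0
        exact this.mono_left nhdsWithin_le_nhds)
      L2
  apply HasDerivAt.lhopital_zero_nhdsNE
    (f' := fun s => N1 α s) (g' := fun s => 3*s^2)
    (hx_ev.mono fun s hs => N0_deriv α hs)
    (Eventually.of_forall fun s => by
      simpa using hasDerivAt_pow 3 s)
    (hs_ne.mono fun s hs => mul_ne_zero (by norm_num) (pow_ne_zero 2 hs))
    ((tN0 α).mono_left nhdsWithin_le_nhds)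
    (pow_tendsto_zero 3 (by norm_num))
    L1

lemma monomial_tendsto (c : ℝ) (n : ℕ) (hn : 0 < n) :
    Tendsto (fun s : ℝ => c*s^n) (𝓝[≠] (0:ℝ)) (𝓝 0) := by
  simpa using (pow_tendsto_zero n hn).const_mul c

lemma partA (α : ℝ) :
    Tendsto (fun s : ℝ => F0 α s / s^4) (𝓝[≠] (0:ℝ)) (𝓝 (α^2*(α^2-1)/12)) := by
  have L4 : Tendsto (fun s : ℝ => F4 α s / 24) (𝓝[≠] (0:ℝ)) (𝓝 (α^2*(α^2-1)/12)) := by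
    have := ((tF4 α).div_const 24).mono_left (nhdsWithin_le_nhds (s := {(0:ℝ)}ᶜ))
    convert this using 2
    ring
  have L3 : Tendsto (fun s : ℝ => F3 α s / (24*s)) (𝓝[≠] (0:ℝ)) (𝓝 (α^2*(α^2-1)/12)) := by
    apply HasDerivAt.lhopital_zero_nhdsNE
      (f' := fun s => F4 α s) (g' := fun _ => (24:ℝ))
      (hx_ev.mono fun s hs => F3_deriv α hs)
      (Eventually.of_forall fun s => by simpa using (hasDerivAt_id s).const_mul (24:ℝ))
      (Eventually.of_forall fun s => by norm_num)
      ((tF3 α).mono_left nhdsWithin_le_nhds)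
      (by simpa using monomial_tendsto 24 1 (by norm_num))
      L4
  have L2 : Tendsto (fun s : ℝ => F2 α s / (12*s^2)) (𝓝[≠] (0:ℝ)) (𝓝 (α^2*(α^2-1)/12)) := by
    apply HasDerivAt.lhopital_zero_nhdsNE
      (f' := fun s => F3 α s) (g' := fun s => 24*s)
      (hx_ev.mono fun s hs => F2_deriv α hs)
      (Eventually.of_forall fun s => by
        have := (hasDerivAt_pow 2 s).const_mul (12:ℝ)
        refine this.congr_deriv ?_
        push_cast; ring)
      (hs_ne.mono fun s hs => mul_ne_zero (by norm_num) hs)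
      ((tF2 α).mono_left nhdsWithin_le_nhds)
      (monomial_tendsto 12 2 (by norm_num))
      L3
  have L1 : Tendsto (fun s : ℝ => F1 α s / (4*s^3)) (𝓝[≠] (0:ℝ)) (𝓝 (α^2*(α^2-1)/12)) := by
    apply HasDerivAt.lhopital_zero_nhdsNE
      (f' := fun s => F2 α s) (g' := fun s => 12*s^2)
      (hx_ev.mono fun s hs => F1_deriv α hs)
      (Eventually.of_forall fun s => by
        have := (hasDerivAt_pow 3 s).const_mul (4:ℝ)
        refine this.congr_deriv ?_
        push_cast; ring)
      (hs_ne.mono fun s hs => mul_ne_zero (by norm_num) (pow_ne_zero 2 hs))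
      ((tF1 α).mono_left nhdsWithin_le_nhds)
      (monomial_tendsto 4 3 (by norm_num))
      L2
  apply HasDerivAt.lhopital_zero_nhdsNE
    (f' := fun s => F1 α s) (g' := fun s => 4*s^3)
    (hx_ev.mono fun s hs => F0_deriv α hs)
    (Eventually.of_forall fun s => by simpa using hasDerivAt_pow 4 s)
    (hs_ne.mono fun s hs => mul_ne_zero (by norm_num) (pow_ne_zero 3 hs))
    ((tF0 α).mono_left nhdsWithin_le_nhds)
    (pow_tendsto_zero 4 (by norm_num))
    L1

lemma limit_zero (α : ℝ) (hα : 2 ≤ α) :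
    Tendsto (fun s : ℝ => s * dPfun α s / Pfun α s) (𝓝[≠] (0:ℝ)) (𝓝 4) := by
  have hα0 : (0:ℝ) < α := by linarith
  have hα1 : (0:ℝ) < α^2 - 1 := by nlinarith
  have hKne : α^2*(α^2-1)/12 ≠ 0 := by positivity
  have hx_pos : ∀ᶠ s : ℝ in 𝓝[≠] (0:ℝ), (0:ℝ) < 1 + s := by
    apply eventually_nhdsWithin_of_eventually_nhds
    have h : ∀ᶠ s : ℝ in 𝓝 0, s ∈ Ioo (-(1:ℝ)/2) (1/2) :=
      Ioo_mem_nhds (by norm_num) (by norm_num)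
    filter_upwards [h] with s hs
    simp only [Set.mem_Ioo] at hs
    linarith [hs.1]
  have hFne : ∀ᶠ s : ℝ in 𝓝[≠] (0:ℝ), F0 α s ≠ 0 := by
    filter_upwards [(partA α).eventually_ne hKne] with s h h0
    exact h (by rw [h0]; simp)
  have h3 : Tendsto (fun s : ℝ => (1+s)^(α-2)) (𝓝[≠] (0:ℝ)) (𝓝 1) :=
    (opow_tendsto (α-2)).mono_left nhdsWithin_le_nhds
  have hmain : Tendsto (fun s : ℝ => 2*α * ((1+s)^(α-2) * (N0 α s / s^3)) / (F0 α s / s^4))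
      (𝓝[≠] (0:ℝ)) (𝓝 (2*α * (1 * (α*(α+1)*(α-1)/6)) / (α^2*(α^2-1)/12))) :=
    ((h3.mul (partB α)).const_mul (2*α)).div (partA α) hKne
  have hval : 2*α * (1 * (α*(α+1)*(α-1)/6)) / (α^2*(α^2-1)/12) = 4 := by
    rw [div_eq_iff hKne]; ring
  rw [hval] at hmain
  apply Tendsto.congr' ?_ hmain
  filter_upwards [hs_ne, hx_pos, hFne] with s hs hx hF
  have hxne : (1:ℝ) + s ≠ 0 := ne_of_gt hx
  have key : ∀ b c : ℝ, (1+s)^(b+c) = (1+s)^b * (1+s)^c := fun b c => Real.rpow_add hx b c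
  have hi1 : (1+s)^(-1:ℝ) = (1+s)⁻¹ := Real.rpow_neg_one _
  have a1 : (1+s)^(α+1) = (1+s)^α * (1+s) := by
    rw [key, Real.rpow_one]
  have a2 : (1+s)^(α-1) = (1+s)^α * (1+s)⁻¹ := by
    rw [show α-1 = α + -1 from by ring, key, hi1]
  have a3 : (1+s)^(α-2) = (1+s)^α * ((1+s)*(1+s))⁻¹ := by
    rw [show α-2 = α + -1 + -1 from by ring, key, key, hi1, mul_inv]
    ring
  have a4 : (1+s)^(2*α) = (1+s)^α * (1+s)^α := by
    rw [show 2*α = α + α from by ring, key]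
  have hNval : s * dPfun α s = (2/(α*(α^2-1))) * ((1+s)^(α-2) * N0 α s) * s := by
    unfold dPfun N0
    rw [abs_of_pos hx, a1]
    ring
  have hPval : Pfun α s = 1/(α^2*(α^2-1)) * F0 α s := by
    unfold Pfun F0
    rw [abs_of_pos hx, a1, a2, a3, a4]
    field_simp
  rw [hNval, hPval]
  field_simp [hs, hF, hα0.ne', hα1.ne']

lemma base_top : Tendsto (fun s : ℝ => 1 + s) atTop atTop :=
  tendsto_atTop_add_const_left _ 1 tendsto_id

lemma inv_top : Tendsto (fun s : ℝ => (1+s)⁻¹) atTop (𝓝 0) :=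
  tendsto_inv_atTop_zero.comp base_top

lemma frac_top : Tendsto (fun s : ℝ => s/(1+s)) atTop (𝓝 1) := by
  have h : Tendsto (fun s : ℝ => 1 - (1+s)⁻¹) atTop (𝓝 (1 - 0)) :=
    tendsto_const_nhds.sub inv_top
  rw [sub_zero] at h
  apply Tendsto.congr' ?_ h
  filter_upwards [eventually_ge_atTop (1:ℝ)] with s hs
  have hx : (1:ℝ) + s ≠ 0 := by positivity
  field_simp
  ring

lemma rpow_top (β : ℝ) (hβ : 0 < β) : Tendsto (fun s : ℝ => (1+s)^(-β)) atTop (𝓝 0) :=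
  (tendsto_rpow_neg_atTop hβ).comp base_top

lemma cube_top (α : ℝ) (hα : 2 ≤ α) (k : ℕ) (hk : (k:ℝ) ≤ 3) :
    Tendsto (fun s : ℝ => s^k * (1+s)^(-(α+2))) atTop (𝓝 0) := by
  have h2 : Tendsto (fun s : ℝ => (1+s)^((k:ℝ)-(α+2))) atTop (𝓝 0) := by
    have h := rpow_top ((α+2)-(k:ℝ)) (by linarith)
    simp only [show -((α+2)-(k:ℝ)) = (k:ℝ)-(α+2) from by ring] at h
    exact h
  have h1 : Tendsto (fun s : ℝ => (s/(1+s))^k * (1+s)^((k:ℝ)-(α+2))) atTop (𝓝 0) := by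
    have := (frac_top.pow k).mul h2
    simpa using this
  apply Tendsto.congr' ?_ h1
  filter_upwards [eventually_ge_atTop (1:ℝ)] with s hs
  have hx : (0:ℝ) < 1 + s := by linarith
  have e : (1+s)^((k:ℝ)-(α+2)) = (1+s)^(k:ℝ) * (1+s)^(-(α+2)) := by
    rw [show (k:ℝ)-(α+2) = (k:ℝ) + -(α+2) from by ring, Real.rpow_add hx]
  rw [e, Real.rpow_natCast, div_pow]
  field_simp


set_option maxHeartbeats 2000000 in
lemma cancel_helper (A B n d u : ℝ) (hu : u ≠ 0) (hd : d ≠ 0) (hB : B ≠ 0) :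
    A * (n * u) / (B * (d * u)) = (A/B) * (n/d) := by
  field_simp

lemma limit_top (α : ℝ) (hα : 2 ≤ α) :
    Tendsto (fun s : ℝ => s * dPfun α s / Pfun α s) atTop (𝓝 (2*α)) := by
  have hα0 : (0:ℝ) < α := by linarith
  have hα1 : (0:ℝ) < α^2 - 1 := by nlinarith
  have hNum : Tendsto (fun s : ℝ =>
      s/(1+s) - (s + (α+1)*s^2 + α*(α+1)/2*s^3) * (1+s)^(-(α+2))) atTop (𝓝 1) := by
    have h2 : Tendsto (fun s : ℝ =>
        (s + (α+1)*s^2 + α*(α+1)/2*s^3) * (1+s)^(-(α+2))) atTop (𝓝 0) := by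
      have c1 := cube_top α hα 1 (by norm_num)
      have c2 := cube_top α hα 2 (by norm_num)
      have c3 := cube_top α hα 3 (by norm_num)
      have h := c1.add ((c2.const_mul (α+1)).add (c3.const_mul (α*(α+1)/2)))
      have h' : Tendsto (fun s : ℝ =>
          s^1*(1+s)^(-(α+2)) + ((α+1)*(s^2*(1+s)^(-(α+2))) + α*(α+1)/2*(s^3*(1+s)^(-(α+2)))))
          atTop (𝓝 0) := by simpa using h
      apply Tendsto.congr' ?_ h'
      filter_upwards with s
      ring
    have := frac_top.sub h2
    simpa using this
  have hDen : Tendsto (fun s : ℝ =>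
      1 - α^2*(1+s)^(-(α-1)) + 2*(α^2-1)*(1+s)^(-α) - α^2*(1+s)^(-(α+1)) + (1+s)^(-(2*α)))
      atTop (𝓝 1) := by
    have d1 := rpow_top (α-1) (by linarith)
    have d2 := rpow_top α hα0
    have d3 := rpow_top (α+1) (by linarith)
    have d4 := rpow_top (2*α) (by linarith)
    have h := ((((tendsto_const_nhds (x := (1:ℝ))).sub (d1.const_mul (α^2))).add
      (d2.const_mul (2*(α^2-1)))).sub (d3.const_mul (α^2))).add d4
    simpa using h
  have hDenNe : ∀ᶠ s in atTop, (1 - α^2*(1+s)^(-(α-1)) + 2*(α^2-1)*(1+s)^(-α)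
      - α^2*(1+s)^(-(α+1)) + (1+s)^(-(2*α))) ≠ 0 := hDen.eventually_ne one_ne_zero
  have hmain : Tendsto (fun s : ℝ =>
      2*α * (s/(1+s) - (s + (α+1)*s^2 + α*(α+1)/2*s^3) * (1+s)^(-(α+2))) /
      (1 - α^2*(1+s)^(-(α-1)) + 2*(α^2-1)*(1+s)^(-α) - α^2*(1+s)^(-(α+1)) + (1+s)^(-(2*α))))
      atTop (𝓝 (2*α*1/1)) := (hNum.const_mul (2*α)).div hDen one_ne_zero
  rw [show 2*α*1/1 = 2*α from by ring] at hmain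
  apply Tendsto.congr' ?_ hmain
  filter_upwards [eventually_ge_atTop (1:ℝ), hDenNe] with s hs hden
  have hx : (0:ℝ) < 1 + s := by linarith
  have hxne : (1:ℝ) + s ≠ 0 := ne_of_gt hx
  have hu : (0:ℝ) < (1+s)^α := Real.rpow_pos_of_pos hx α
  have key : ∀ b c : ℝ, (1+s)^(b+c) = (1+s)^b * (1+s)^c := fun b c => Real.rpow_add hx b c
  have hi1 : (1+s)^(-1:ℝ) = (1+s)⁻¹ := Real.rpow_neg_one _
  have hm : (1+s)^(-α) = ((1+s)^α)⁻¹ := by rw [Real.rpow_neg hx.le]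
  have a3 : (1+s)^(α-2) = (1+s)^α * ((1+s)*(1+s))⁻¹ := by
    rw [show α-2 = α + -1 + -1 from by ring, key, key, hi1, mul_inv]; ring
  have a4 : (1+s)^(2*α) = (1+s)^α * (1+s)^α := by
    rw [show 2*α = α + α from by ring, key]
  have a5 : (1+s)^(-(α+2)) = ((1+s)^α)⁻¹ * ((1+s)*(1+s))⁻¹ := by
    rw [show -(α+2) = -α + -1 + -1 from by ring, key, key, hm, hi1, mul_inv]; ring
  have a6 : (1+s)^(-(α-1)) = ((1+s)^α)⁻¹ * (1+s) := by
    rw [show -(α-1) = -α + 1 from by ring, key, hm, Real.rpow_one]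
  have a8 : (1+s)^(-(α+1)) = ((1+s)^α)⁻¹ * (1+s)⁻¹ := by
    rw [show -(α+1) = -α + -1 from by ring, key, hm, hi1]
  have a9 : (1+s)^(-(2*α)) = ((1+s)^α * (1+s)^α)⁻¹ := by
    rw [show -(2*α) = -α + -α from by ring, key, hm, mul_inv]
  have hNval : s * dPfun α s = (2/(α*(α^2-1))) *
      ((s/(1+s) - (s + (α+1)*s^2 + α*(α+1)/2*s^3) * (1+s)^(-(α+2))) * ((1+s)^α*(1+s)^α)) := by
    unfold dPfun
    rw [abs_of_pos hx, a3, a5]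
    field_simp
    ring
  have hPval : Pfun α s = 1/(α^2*(α^2-1)) *
      ((1 - α^2*(1+s)^(-(α-1)) + 2*(α^2-1)*(1+s)^(-α) - α^2*(1+s)^(-(α+1)) + (1+s)^(-(2*α)))
        * ((1+s)^α*(1+s)^α)) := by
    unfold Pfun
    rw [abs_of_pos hx, a3, a4, a6, hm, a8, a9]
    field_simp
  rw [hNval, hPval,
    cancel_helper _ _ _ _ _ (mul_ne_zero hu.ne' hu.ne') hden (by positivity),
    show (2/(α*(α^2-1)) / (1/(α^2*(α^2-1)))) = 2*α from by
      rw [div_div_div_eq]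
      field_simp,
    mul_div_assoc]

lemma base_bot : Tendsto (fun s : ℝ => -(1+s)) atBot atTop := by
  have h := tendsto_neg_atBot_atTop.comp (tendsto_atBot_add_const_left _ (1:ℝ) tendsto_id)
  exact h

lemma inv_bot : Tendsto (fun s : ℝ => (1+s)⁻¹) atBot (𝓝 0) := by
  have h := (tendsto_inv_atTop_zero.comp base_bot).neg
  have he : (fun s : ℝ => (1+s)⁻¹) = fun s : ℝ => -((-(1+s))⁻¹) := by
    funext s; rw [inv_neg, neg_neg]
  rw [he]
  simpa [Function.comp] using h

lemma frac_bot : Tendsto (fun s : ℝ => s/(1+s)) atBot (𝓝 1) := by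
  have h : Tendsto (fun s : ℝ => 1 - (1+s)⁻¹) atBot (𝓝 (1 - 0)) :=
    tendsto_const_nhds.sub inv_bot
  rw [sub_zero] at h
  apply Tendsto.congr' ?_ h
  filter_upwards [eventually_le_atBot (-2:ℝ)] with s hs
  have hx : (1:ℝ) + s ≠ 0 := by intro hc; linarith [hc]
  field_simp
  ring

lemma rpow_bot (β : ℝ) (hβ : 0 < β) : Tendsto (fun s : ℝ => (-(1+s))^(-β)) atBot (𝓝 0) := by
  have h := (tendsto_rpow_neg_atTop hβ).comp base_bot
  simpa [Function.comp_def] using h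

lemma cube_bot (α : ℝ) (hα : 2 ≤ α) (k : ℕ) (hk : (k:ℝ) ≤ 3) :
    Tendsto (fun s : ℝ => s^k * (-(1+s))^(-(α+2))) atBot (𝓝 0) := by
  have h2 : Tendsto (fun s : ℝ => (-(1+s))^((k:ℝ)-(α+2))) atBot (𝓝 0) := by
    have h := rpow_bot ((α+2)-(k:ℝ)) (by linarith)
    simp only [show -((α+2)-(k:ℝ)) = (k:ℝ)-(α+2) from by ring] at h
    exact h
  have hfrac : Tendsto (fun s : ℝ => s/(-(1+s))) atBot (𝓝 (-1)) :=
    Tendsto.congr (fun s => (div_neg (a := s) (b := 1+s)).symm) frac_bot.neg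
  have h1 : Tendsto (fun s : ℝ => (s/(-(1+s)))^k * (-(1+s))^((k:ℝ)-(α+2))) atBot (𝓝 0) := by
    have := (hfrac.pow k).mul h2
    simpa using this
  apply Tendsto.congr' ?_ h1
  filter_upwards [eventually_le_atBot (-2:ℝ)] with s hs
  have hy : (0:ℝ) < -(1+s) := by linarith
  have e : (-(1+s))^((k:ℝ)-(α+2)) = (-(1+s))^(k:ℝ) * (-(1+s))^(-(α+2)) := by
    rw [show (k:ℝ)-(α+2) = (k:ℝ) + -(α+2) from by ring, Real.rpow_add hy]
  have hyk : ((-(1+s)):ℝ)^k ≠ 0 := pow_ne_zero _ (ne_of_gt hy)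
  rw [e, Real.rpow_natCast, ← mul_assoc, div_pow, div_mul_cancel₀ _ hyk]

set_option maxHeartbeats 1000000 in
lemma limit_bot (α : ℝ) (hα : 2 ≤ α) :
    Tendsto (fun s : ℝ => s * dPfun α s / Pfun α s) atBot (𝓝 (2*α)) := by
  have hα0 : (0:ℝ) < α := by linarith
  have hα1 : (0:ℝ) < α^2 - 1 := by nlinarith
  have hNum : Tendsto (fun s : ℝ =>
      s/(1+s) - (s + (α+1)*s^2 + α*(α+1)/2*s^3) * (-(1+s))^(-(α+2))) atBot (𝓝 1) := by
    have h2 : Tendsto (fun s : ℝ =>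
        (s + (α+1)*s^2 + α*(α+1)/2*s^3) * (-(1+s))^(-(α+2))) atBot (𝓝 0) := by
      have c1 := cube_bot α hα 1 (by norm_num)
      have c2 := cube_bot α hα 2 (by norm_num)
      have c3 := cube_bot α hα 3 (by norm_num)
      have h := c1.add ((c2.const_mul (α+1)).add (c3.const_mul (α*(α+1)/2)))
      have h' : Tendsto (fun s : ℝ =>
          s^1*(-(1+s))^(-(α+2)) + ((α+1)*(s^2*(-(1+s))^(-(α+2)))
            + α*(α+1)/2*(s^3*(-(1+s))^(-(α+2))))) atBot (𝓝 0) := by simpa using h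
      apply Tendsto.congr' ?_ h'
      filter_upwards with s
      ring
    have := frac_bot.sub h2
    simpa using this
  have hDen : Tendsto (fun s : ℝ =>
      1 + α^2*(-(1+s))^(-(α-1)) + 2*(α^2-1)*(-(1+s))^(-α) + α^2*(-(1+s))^(-(α+1))
        + (-(1+s))^(-(2*α))) atBot (𝓝 1) := by
    have d1 := rpow_bot (α-1) (by linarith)
    have d2 := rpow_bot α hα0
    have d3 := rpow_bot (α+1) (by linarith)
    have d4 := rpow_bot (2*α) (by linarith)
    have h := ((((tendsto_const_nhds (x := (1:ℝ))).add (d1.const_mul (α^2))).add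
      (d2.const_mul (2*(α^2-1)))).add (d3.const_mul (α^2))).add d4
    simpa using h
  have hDenNe : ∀ᶠ s in atBot, (1 + α^2*(-(1+s))^(-(α-1)) + 2*(α^2-1)*(-(1+s))^(-α)
      + α^2*(-(1+s))^(-(α+1)) + (-(1+s))^(-(2*α))) ≠ 0 := hDen.eventually_ne one_ne_zero
  have hmain : Tendsto (fun s : ℝ =>
      2*α * (s/(1+s) - (s + (α+1)*s^2 + α*(α+1)/2*s^3) * (-(1+s))^(-(α+2))) /
      (1 + α^2*(-(1+s))^(-(α-1)) + 2*(α^2-1)*(-(1+s))^(-α) + α^2*(-(1+s))^(-(α+1))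
        + (-(1+s))^(-(2*α)))) atBot (𝓝 (2*α*1/1)) :=
    (hNum.const_mul (2*α)).div hDen one_ne_zero
  rw [show 2*α*1/1 = 2*α from by ring] at hmain
  apply Tendsto.congr' ?_ hmain
  filter_upwards [eventually_le_atBot (-2:ℝ), hDenNe] with s hs hden
  have hxneg : 1 + s < 0 := by linarith
  have hy : (0:ℝ) < -(1+s) := by linarith
  have hyne : -(1+s) ≠ (0:ℝ) := ne_of_gt hy
  have hxne : (1:ℝ) + s ≠ 0 := by intro hc; rw [hc] at hxneg; exact lt_irrefl 0 hxneg
  have hu : (0:ℝ) < (-(1+s))^α := Real.rpow_pos_of_pos hy α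
  have key : ∀ b c : ℝ, (-(1+s))^(b+c) = (-(1+s))^b * (-(1+s))^c :=
    fun b c => Real.rpow_add hy b c
  have hi1 : (-(1+s))^(-1:ℝ) = (-(1+s))⁻¹ := Real.rpow_neg_one _
  have hm : (-(1+s))^(-α) = ((-(1+s))^α)⁻¹ := by rw [Real.rpow_neg hy.le]
  have a3 : (-(1+s))^(α-2) = (-(1+s))^α * ((1+s)*(1+s))⁻¹ := by
    rw [show α-2 = α + -1 + -1 from by ring, key, key, hi1, inv_neg, mul_inv]; ring
  have a4 : (-(1+s))^(2*α) = (-(1+s))^α * (-(1+s))^α := by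
    rw [show 2*α = α + α from by ring, key]
  have a5 : (-(1+s))^(-(α+2)) = ((-(1+s))^α)⁻¹ * ((1+s)*(1+s))⁻¹ := by
    rw [show -(α+2) = -α + -1 + -1 from by ring, key, key, hm, hi1, inv_neg, mul_inv]; ring
  have a6 : (-(1+s))^(-(α-1)) = ((-(1+s))^α)⁻¹ * (-(1+s)) := by
    rw [show -(α-1) = -α + 1 from by ring, key, hm, Real.rpow_one]
  have a8 : (-(1+s))^(-(α+1)) = ((-(1+s))^α)⁻¹ * -(1+s)⁻¹ := by
    rw [show -(α+1) = -α + -1 from by ring, key, hm, hi1, inv_neg]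
  have a9 : (-(1+s))^(-(2*α)) = ((-(1+s))^α * (-(1+s))^α)⁻¹ := by
    rw [show -(2*α) = -α + -α from by ring, key, hm, mul_inv]
  have hw : (1+s) * (1+s)⁻¹ = 1 := mul_inv_cancel₀ hxne
  have f1 : (-(1+s))^(-(α+2)) * ((-(1+s))^α * (-(1+s))^α) = (-(1+s))^(α-2) := by
    rw [← key, ← key]; congr 1; ring
  have f3 : (-(1+s))^(α-2) * ((1+s)*(1+s)) = (-(1+s))^α := by
    have h1 : (-(1+s))^α = (-(1+s))^(α-2) * (-(1+s))^(1:ℝ) * (-(1+s))^(1:ℝ) := by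
      rw [← key, ← key]; congr 1; ring
    rw [h1, Real.rpow_one]; ring
  have b1 : (-(1+s))^(-(α-1)) * ((-(1+s))^α * (-(1+s))^α) = (-(1+s))^(α+1) := by
    rw [← key, ← key]; congr 1; ring
  have b2 : (-(1+s))^(-α) * ((-(1+s))^α * (-(1+s))^α) = (-(1+s))^α := by
    rw [← key, ← key]; congr 1; ring
  have b3 : (-(1+s))^(-(α+1)) * ((-(1+s))^α * (-(1+s))^α) = (-(1+s))^(α-1) := by
    rw [← key, ← key]; congr 1; ring
  have b4 : (-(1+s))^(-(2*α)) * ((-(1+s))^α * (-(1+s))^α) = 1 := by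
    rw [← key, ← key, show -(2*α)+(α+α) = (0:ℝ) from by ring, Real.rpow_zero]
  have c1 : (-(1+s))^(α+1) = (-(1+s))^α * -(1+s) := by
    rw [key, Real.rpow_one]
  have c2 : (-(1+s))^(α-1) = (-(1+s))^(α-2) * -(1+s) := by
    rw [show α-1 = α-2+1 from by ring, key, Real.rpow_one]
  have hNval : s * dPfun α s = (2/(α*(α^2-1))) *
      ((s/(1+s) - (s + (α+1)*s^2 + α*(α+1)/2*s^3) * (-(1+s))^(-(α+2)))
        * ((-(1+s))^α*(-(1+s))^α)) := by
    unfold dPfun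
    rw [abs_of_neg hxneg]
    linear_combination (2/(α*(α^2-1))) *
      ((s + (α+1)*s^2 + α*(α+1)/2*s^3) * f1
        + (s * (1+s)⁻¹ * (-(1+s))^α) * f3
        - (s * (-(1+s))^(α-2) * (-(1+s))^α * (1+s)) * hw)
  have hPval : Pfun α s = 1/(α^2*(α^2-1)) *
      ((1 + α^2*(-(1+s))^(-(α-1)) + 2*(α^2-1)*(-(1+s))^(-α) + α^2*(-(1+s))^(-(α+1))
        + (-(1+s))^(-(2*α))) * ((-(1+s))^α*(-(1+s))^α)) := by
    unfold Pfun
    rw [abs_of_neg hxneg]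
    linear_combination (1/(α^2*(α^2-1))) *
      (a4 - α^2*b1 - α^2*c1 - 2*(α^2-1)*b2 - α^2*b3 - α^2*c2 - b4)
  rw [hNval, hPval,
    cancel_helper _ _ _ _ _ (mul_ne_zero hu.ne' hu.ne') hden (by positivity),
    show (2/(α*(α^2-1)) / (1/(α^2*(α^2-1)))) = 2*α from by
      rw [div_div_div_eq]
      field_simp,
    mul_div_assoc]


end Stmt12Aux

/-- For `α ≥ 2`:
`lim_{s→0} s ∂_s P_α(s) / P_α(s) = 4`, and
`lim_{s→+∞} s ∂_s P_α(s) / P_α(s) = lim_{s→−∞} s ∂_s P_α(s) / P_α(s) = 2α`. -/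
theorem statement12 (α : ℝ) (hα : 2 ≤ α) :
    Tendsto (fun s : ℝ => s * dPfun α s / Pfun α s) (𝓝[≠] (0 : ℝ)) (𝓝 4) ∧
    Tendsto (fun s : ℝ => s * dPfun α s / Pfun α s) atTop (𝓝 (2 * α)) ∧
    Tendsto (fun s : ℝ => s * dPfun α s / Pfun α s) atBot (𝓝 (2 * α)) :=
  ⟨Stmt12Aux.limit_zero α hα, Stmt12Aux.limit_top α hα, Stmt12Aux.limit_bot α hα⟩
end

section
/- Let C : ℝ → ℝ be Lipschitz and non-decreasing with C(y) − C(x) = ∫ₓ^y C'(t)dt, and let Z be the set of points where C' exists and equals 0. If Z has positive Lebesgue measure, then there exist φ* ∈ Z and a sequence ω_n ↓ 0 such that ω_n·C'(φ* + ω_n)/(C(φ* + ω_n) − C(φ*)) → +∞. -/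
open Filter Topology MeasureTheory Set Metric ENNReal
open scoped ENNReal

private lemma ae_hasDerivAt_of_FTC (C C' : ℝ → ℝ)
    (hInt : ∀ a b : ℝ, IntervalIntegrable C' volume a b)
    (hloc : LocallyIntegrable C' volume)
    (hFTC : ∀ x y : ℝ, C y - C x = ∫ t in x..y, C' t) :
    ∀ᵐ x, HasDerivAt C (C' x) x := by
  filter_upwards [(Besicovitch.vitaliFamily (volume : Measure ℝ)).ae_tendsto_average_norm_sub hloc]
    with x hx
  have h2 : Tendsto (fun r : ℝ => ⨍ y in closedBall x r, ‖C' y - C' x‖) (𝓝[>] 0) (𝓝 0) :=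
    hx.comp (Besicovitch.tendsto_filterAt volume x)
  rw [hasDerivAt_iff_tendsto_slope, ← tendsto_sub_nhds_zero_iff]
  have habs : Tendsto (fun y : ℝ => |y - x|) (𝓝[≠] x) (𝓝[>] 0) := by
    rw [tendsto_nhdsWithin_iff]
    constructor
    · have h : Continuous (fun y : ℝ => |y - x|) := (continuous_id.sub continuous_const).abs
      have h2 := (h.tendsto x).mono_left (nhdsWithin_le_nhds (s := {x}ᶜ))
      simpa using h2
    · filter_upwards [self_mem_nhdsWithin] with y hy
      exact abs_pos.2 (sub_ne_zero.2 hy)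
  have hg : Tendsto (fun y : ℝ => 2 * ⨍ t in closedBall x |y - x|, ‖C' t - C' x‖)
      (𝓝[≠] x) (𝓝 0) := by
    have h := (h2.comp habs).const_mul (2 : ℝ)
    simpa using h
  apply squeeze_zero_norm' _ hg
  filter_upwards [self_mem_nhdsWithin] with y (hy : y ≠ x)
  have hrpos : 0 < |y - x| := abs_pos.2 (sub_ne_zero.2 hy)
  have hnum : C y - C x - (y - x) * C' x = ∫ t in x..y, (C' t - C' x) := by
    rw [intervalIntegral.integral_sub (hInt x y) intervalIntegrable_const,
      ← hFTC x y, intervalIntegral.integral_const, smul_eq_mul]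
  have hIcb : IntegrableOn (fun t => ‖C' t - C' x‖) (closedBall x |y - x|) volume := by
    exact ((hloc.integrableOn_isCompact (isCompact_closedBall x _)).sub
      (integrableOn_const measure_closedBall_lt_top.ne)).norm
  have key : ‖∫ t in x..y, (C' t - C' x)‖ ≤ ∫ t in closedBall x |y - x|, ‖C' t - C' x‖ := by
    refine (intervalIntegral.norm_integral_le_integral_norm_uIoc).trans ?_
    apply setIntegral_mono_set hIcb
    · filter_upwards with t using norm_nonneg _
    · apply HasSubset.Subset.eventuallyLE
      intro t ht
      rw [Set.uIoc] at ht
      rw [mem_closedBall, Real.dist_eq]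
      rcases le_total x y with h | h
      · rw [min_eq_left h, max_eq_right h] at ht
        rw [abs_of_pos (by linarith [ht.1] : (0:ℝ) < t - x), abs_of_nonneg (by linarith : (0:ℝ) ≤ y - x)]
        linarith [ht.2]
      · rw [min_eq_right h, max_eq_left h] at ht
        rw [abs_of_nonpos (by linarith [ht.2] : t - x ≤ 0), abs_of_nonpos (by linarith : y - x ≤ 0)]
        linarith [ht.1]
  have havg : ∫ t in closedBall x |y - x|, ‖C' t - C' x‖
      = (2 * |y - x|) * ⨍ t in closedBall x |y - x|, ‖C' t - C' x‖ := by
    rw [← measure_smul_setAverage _ (μ := volume) measure_closedBall_lt_top.ne, measureReal_def,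
      Real.volume_closedBall, ENNReal.toReal_ofReal (by linarith), smul_eq_mul]
  have hslope : slope C x y - C' x = (C y - C x - (y - x) * C' x) / (y - x) := by
    rw [slope_def_field]
    field_simp [sub_ne_zero.2 hy]
  rw [hslope, hnum]
  rw [norm_div, Real.norm_eq_abs (y - x)]
  rw [div_le_iff₀ hrpos]
  calc ‖∫ t in x..y, (C' t - C' x)‖ ≤ (2 * |y - x|) * ⨍ t in closedBall x |y - x|, ‖C' t - C' x‖ := by
        rw [← havg]; exact key
    _ = 2 * (⨍ t in closedBall x |y - x|, ‖C' t - C' x‖) * |y - x| := by ring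


/-- Let `C : ℝ → ℝ` be Lipschitz and non-decreasing (in fact, as the angle
correspondence of a `C¹` strongly convex norm, strictly increasing) with
`C y − C x = ∫ₓ^y C'`, and let `Z` be the set of points where the derivative of `C` exists
and equals `0`.  If `Z` has positive Lebesgue measure, then there exist `φ* ∈ Z` and a
sequence `ωₙ ↓ 0` of positive numbers such that
`ωₙ · C'(φ* + ωₙ) / (C(φ* + ωₙ) − C(φ*)) → +∞`. -/
theorem statement14
    (C C' : ℝ → ℝ) (K : NNReal) (hlip : LipschitzWith K C)
    (hmono : Monotone C) (hsmono : StrictMono C)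
    (hFTC : ∀ x y : ℝ, C y - C x = ∫ t in x..y, C' t)
    (Z : Set ℝ) (hZ : Z = {x : ℝ | HasDerivAt C (C' x) x ∧ C' x = 0})
    (hZpos : 0 < volume Z) :
    ∃ φs ∈ Z, ∃ ωn : ℕ → ℝ, (∀ n, 0 < ωn n) ∧ Tendsto ωn atTop (𝓝 0) ∧
      Tendsto (fun n => ωn n * C' (φs + ωn n) / (C (φs + ωn n) - C φs)) atTop atTop := by
  classical
  have hInt : ∀ a b : ℝ, IntervalIntegrable C' volume a b := by
    intro a b
    by_contra h
    have h0 : C b - C a = 0 := by rw [hFTC a b, intervalIntegral.integral_undef h]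
    have hab : a ≠ b := by
      rintro rfl
      exact h (IntervalIntegrable.refl)
    rcases hab.lt_or_gt with h1 | h1
    · exact absurd (sub_eq_zero.1 h0) (hsmono h1).ne'
    · exact absurd (sub_eq_zero.1 h0) (hsmono h1).ne
  have hloc : LocallyIntegrable C' volume := by
    rw [locallyIntegrable_iff]
    intro k hk
    obtain ⟨r, hr⟩ := hk.isBounded.subset_closedBall 0
    have hr' : k ⊆ Icc (-(max r 0)) (max r 0) := by
      refine hr.trans ?_
      rw [Real.closedBall_eq_Icc]
      exact Icc_subset_Icc (by rw [zero_sub]; exact neg_le_neg (le_max_left r 0))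
        (by rw [zero_add]; exact le_max_left r 0)
    refine IntegrableOn.mono_set ?_ hr'
    exact (intervalIntegrable_iff_integrableOn_Icc_of_le (by linarith [le_max_right r 0])).1 (hInt _ _)
  have hae_deriv := ae_hasDerivAt_of_FTC C C' hInt hloc hFTC
  set Z' : Set ℝ := {x | DifferentiableAt ℝ C x} ∩ (deriv C)⁻¹' {0} with hZ'def
  have hZ'meas : MeasurableSet Z' :=
    (measurableSet_of_differentiableAt ℝ C).inter ((measurable_deriv C) (measurableSet_singleton 0))
  have hZsub : Z ⊆ Z' := by
    intro x hx
    rw [hZ] at hx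
    refine ⟨hx.1.differentiableAt, ?_⟩
    simp only [mem_preimage, mem_singleton_iff]
    rw [hx.1.deriv, hx.2]
  have hZ'ae : ∀ᵐ x, x ∈ Z' → C' x = 0 := by
    filter_upwards [hae_deriv] with x hx hxZ'
    have h1 : deriv C x = C' x := hx.deriv
    have h2 : deriv C x = 0 := hxZ'.2
    rw [← h1, h2]
  obtain ⟨φs, hφsZ, hφdens⟩ : ∃ φs ∈ Z, Tendsto
      (fun r => volume (Z' ∩ closedBall φs r) / volume (closedBall φs r)) (𝓝[>] 0) (𝓝 1) := by
    have hdens := Besicovitch.ae_tendsto_measure_inter_div_of_measurableSet volume hZ'meas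
    set B := {x : ℝ | ¬ Tendsto (fun r => volume (Z' ∩ closedBall x r) / volume (closedBall x r))
      (𝓝[>] 0) (𝓝 (Z'.indicator 1 x))} with hBdef
    have hBnull : volume B = 0 := by
      rw [hBdef]
      exact ae_iff.1 hdens
    have hZB : 0 < volume (Z \ B) := by
      rw [measure_diff_null hBnull]
      exact hZpos
    obtain ⟨φs, hφs⟩ := nonempty_of_measure_ne_zero hZB.ne'
    refine ⟨φs, hφs.1, ?_⟩
    have h1 : Z'.indicator (1 : ℝ → ℝ≥0∞) φs = 1 := by
      rw [indicator_of_mem (hZsub hφs.1)]; rfl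
    have h2 := not_not.1 hφs.2
    rwa [h1] at h2
  -- quantitative density bound
  have hdens : ∀ ε : ℝ, 0 < ε → ε ≤ 1 → ∃ δ > 0, ∀ t, 0 < t → t ≤ δ →
      (volume (Ioc φs (φs + t) \ Z')).toReal ≤ ε * t := by
    intro ε hε hε1
    set c : ℝ≥0∞ := ENNReal.ofReal (ε/2) with hcdef
    have hc0 : c ≠ 0 := by
      simp only [hcdef, ne_eq, ENNReal.ofReal_eq_zero, not_le]
      linarith
    have hlt : (1:ℝ≥0∞) - c < 1 := ENNReal.sub_lt_self one_ne_top one_ne_zero hc0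
    have hev : ∀ᶠ r in 𝓝[>] (0:ℝ),
        1 - c < volume (Z' ∩ closedBall φs r) / volume (closedBall φs r) :=
      hφdens.eventually (eventually_gt_nhds hlt)
    obtain ⟨u, hu, hsub⟩ := mem_nhdsGT_iff_exists_Ioc_subset.1 hev
    refine ⟨u, hu, ?_⟩
    intro t ht htu
    have hP := hsub (⟨ht, htu⟩ : t ∈ Ioc 0 u)
    simp only [mem_setOf_eq] at hP
    have hcb : volume (closedBall φs t) = ENNReal.ofReal (2*t) := by
      rw [Real.volume_closedBall]
    have hcb0 : volume (closedBall φs t) ≠ 0 := by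
      rw [hcb]; simp only [ne_eq, ENNReal.ofReal_eq_zero, not_le]; linarith
    have hcbt : volume (closedBall φs t) ≠ ⊤ := by rw [hcb]; exact ENNReal.ofReal_ne_top
    have h1 : (1 - c) * volume (closedBall φs t) < volume (Z' ∩ closedBall φs t) :=
      (ENNReal.lt_div_iff_mul_lt (Or.inl hcb0) (Or.inl hcbt)).1 hP
    have h2 : volume (closedBall φs t \ Z') ≤ c * volume (closedBall φs t) := by
      have hd : volume (closedBall φs t \ Z') =
          volume (closedBall φs t) - volume (Z' ∩ closedBall φs t) := by
        rw [← measure_diff inter_subset_right (hZ'meas.inter measurableSet_closedBall).nullMeasurableSet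
          (lt_of_le_of_lt (measure_mono inter_subset_right) hcbt.lt_top).ne]
        congr 1
        ext x
        simp only [mem_diff, mem_inter_iff]
        tauto
      have hc1 : c ≤ 1 := by
        rw [hcdef]; exact ENNReal.ofReal_le_one.2 (by linarith)
      rw [hd, tsub_le_iff_right]
      calc volume (closedBall φs t)
          = (c + (1 - c)) * volume (closedBall φs t) := by
            rw [add_comm, tsub_add_cancel_of_le hc1, one_mul]
        _ = c * volume (closedBall φs t) + (1 - c) * volume (closedBall φs t) := add_mul _ _ _
        _ ≤ c * volume (closedBall φs t) + volume (Z' ∩ closedBall φs t) := add_le_add_right h1.le _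
    have h3 : volume (Ioc φs (φs + t) \ Z') ≤ ENNReal.ofReal (ε * t) := by
      have hIoc : Ioc φs (φs + t) ⊆ closedBall φs t := by
        intro x hx
        rw [mem_closedBall, Real.dist_eq, abs_of_pos (by linarith [hx.1] : (0:ℝ) < x - φs)]
        linarith [hx.2]
      calc volume (Ioc φs (φs + t) \ Z') ≤ volume (closedBall φs t \ Z') :=
            measure_mono (diff_subset_diff_left hIoc)
        _ ≤ c * volume (closedBall φs t) := h2
        _ = ENNReal.ofReal (ε * t) := by
            rw [hcb, hcdef, ← ENNReal.ofReal_mul (by linarith)]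
            congr 1
            ring
    exact ENNReal.toReal_le_of_le_ofReal (by positivity) h3
  have hIpos : ∀ t : ℝ, 0 < t → 0 < C (φs + t) - C φs :=
    fun t ht => sub_pos.2 (hsmono (by linarith))
  have hIK : ∀ t : ℝ, 0 < t → C (φs + t) - C φs ≤ K * t := by
    intro t ht
    have h := hlip.dist_le_mul (φs + t) φs
    rw [Real.dist_eq, Real.dist_eq, add_sub_cancel_left, abs_of_pos ht] at h
    exact (le_abs_self _).trans h
  have hIeq : ∀ t : ℝ, 0 ≤ t → C (φs + t) - C φs = ∫ u in Ioc φs (φs+t), C' u := by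
    intro t ht
    rw [hFTC, intervalIntegral.integral_of_le (by linarith)]
  have hIbnd : ∀ t : ℝ, 0 < t → ∀ s : ℝ, 0 ≤ s → (∀ u ∈ Ioc φs (φs+t), C' u ≤ s) →
      C (φs + t) - C φs ≤ s * (volume (Ioc φs (φs+t) \ Z')).toReal := by
    intro t ht s hs hbound
    rw [hIeq t ht.le]
    have hint1 : IntegrableOn C' (Ioc φs (φs+t)) volume :=
      (intervalIntegrable_iff_integrableOn_Ioc_of_le (by linarith)).1 (hInt _ _)
    have hint2 : IntegrableOn ((Z'ᶜ).indicator (fun _ => s)) (Ioc φs (φs+t)) volume := by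
      apply Integrable.indicator
      · exact integrableOn_const (by rw [Real.volume_Ioc]; exact ENNReal.ofReal_ne_top)
      · exact hZ'meas.compl
    have hle : ∀ᵐ u ∂(volume.restrict (Ioc φs (φs+t))), C' u ≤ (Z'ᶜ).indicator (fun _ => s) u := by
      filter_upwards [ae_restrict_of_ae hZ'ae, ae_restrict_mem measurableSet_Ioc] with u h1 h2
      by_cases hu : u ∈ Z'
      · rw [h1 hu, indicator_of_notMem (by simpa using hu)]
      · rw [indicator_of_mem (by simpa using hu)]
        exact hbound u h2
    calc ∫ u in Ioc φs (φs+t), C' u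
        ≤ ∫ u in Ioc φs (φs+t), (Z'ᶜ).indicator (fun _ => s) u :=
          setIntegral_mono_ae_restrict hint1 hint2 hle
      _ = s * (volume (Ioc φs (φs+t) \ Z')).toReal := by
          rw [setIntegral_indicator hZ'meas.compl, setIntegral_const, smul_eq_mul, mul_comm]
          rw [diff_eq, measureReal_def]
  have hKpos : (0:ℝ) < K := by
    rcases (K.coe_nonneg : (0:ℝ) ≤ K).eq_or_lt with h | h
    · exfalso
      have h1 := hlip.dist_le_mul 1 0
      rw [← h] at h1
      simp only [zero_mul] at h1
      have h2 : C 1 = C 0 := by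
        have := dist_nonneg (x := C 1) (y := C 0)
        have h3 : dist (C 1) (C 0) = 0 := le_antisymm h1 this
        exact dist_eq_zero.1 h3
      exact absurd h2 (hsmono zero_lt_one).ne'
    · exact h
  have main : ∀ n : ℕ, ∃ t : ℝ, 0 < t ∧ t ≤ 1/((n:ℝ)+1) ∧
      (n:ℝ) ≤ t * C' (φs + t) / (C (φs + t) - C φs) := by
    intro n
    set A : ℝ := (n:ℝ) + 1 with hAdef
    have hA0 : 0 < A := by positivity
    have hnA : (n:ℝ) ≤ A := by simp [hAdef]
    set ε : ℝ := 1/(4*A) with hεdef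
    have hε : 0 < ε := by positivity
    have hε1 : ε ≤ 1 := by
      rw [hεdef, div_le_one (by positivity)]
      linarith
    obtain ⟨δ, hδ0, hδ⟩ := hdens ε hε hε1
    set δ' : ℝ := min δ (1/((n:ℝ)+1)) with hδ'def
    have hδ'0 : 0 < δ' := lt_min hδ0 (by positivity)
    by_cases hcase : ∃ t ∈ Ioc (0:ℝ) δ', A * K ≤ C' (φs + t)
    · obtain ⟨t, ht, hC⟩ := hcase
      refine ⟨t, ht.1, le_trans ht.2 (min_le_right _ _), ?_⟩
      have hI := hIpos t ht.1
      rw [le_div_iff₀ hI]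
      have h1 := hIK t ht.1
      calc (n:ℝ) * (C (φs+t) - C φs) ≤ A * (K * t) := by nlinarith
        _ = t * (A * K) := by ring
        _ ≤ t * C' (φs + t) := by nlinarith [ht.1]
    · push_neg at hcase
      set T : Set ℝ := (fun t => C' (φs + t)) '' Ioc 0 δ' with hTdef
      have hTne : T.Nonempty := ⟨_, mem_image_of_mem _ (⟨hδ'0, le_rfl⟩ : δ' ∈ Ioc 0 δ')⟩
      have hTbdd : BddAbove T := by
        refine ⟨A * K, ?_⟩
        rintro y ⟨t, ht, rfl⟩
        exact (hcase t ht).le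
      set s := sSup T with hsdef
      have hs_ub : ∀ t ∈ Ioc (0:ℝ) δ', C' (φs + t) ≤ s :=
        fun t ht => le_csSup hTbdd (mem_image_of_mem _ ht)
      have hspos : 0 < s := by
        by_contra h
        push_neg at h
        have hneg : C (φs + δ') - C φs ≤ 0 := by
          rw [hIeq δ' hδ'0.le]
          apply setIntegral_nonpos measurableSet_Ioc
          intro u hu
          have hmem : u - φs ∈ Ioc (0:ℝ) δ' := ⟨by linarith [hu.1], by linarith [hu.2]⟩
          have h2 := hs_ub _ hmem
          rw [add_sub_cancel] at h2
          linarith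
        exact absurd hneg (not_le.2 (hIpos δ' hδ'0))
      obtain ⟨y, hyT, hy⟩ := exists_lt_of_lt_csSup hTne (by linarith : s/2 < s)
      obtain ⟨t, ht, rfl⟩ := hyT
      refine ⟨t, ht.1, le_trans ht.2 (min_le_right _ _), ?_⟩
      have hI := hIpos t ht.1
      have hIb : C (φs+t) - C φs ≤ s * (ε * t) := by
        have h1 : C (φs + t) - C φs ≤ s * (volume (Ioc φs (φs+t) \ Z')).toReal := by
          apply hIbnd t ht.1 s hspos.le
          intro u hu
          have hmem : u - φs ∈ Ioc (0:ℝ) δ' :=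
            ⟨by linarith [hu.1], le_trans (by linarith [hu.2]) ht.2⟩
          have h2 := hs_ub _ hmem
          rwa [add_sub_cancel] at h2
        have h2 := hδ t ht.1 (le_trans ht.2 (min_le_left _ _))
        calc C (φs + t) - C φs ≤ s * (volume (Ioc φs (φs+t) \ Z')).toReal := h1
          _ ≤ s * (ε * t) := by
              apply mul_le_mul_of_nonneg_left _ hspos.le
              linarith
      rw [le_div_iff₀ hI]
      have hε4 : ε * (4*A) = 1 := by
        rw [hεdef]
        field_simp
      have h3 : (n:ℝ) * (C (φs+t) - C φs) ≤ 2*A*(s*(ε*t)) := by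
        nlinarith [hI]
      have h4 : 2*A*(s*(ε*t)) = s*t/2 := by
        have : ε = 1/(4*A) := hεdef
        rw [this]
        field_simp
        ring
      have h5 : s*t/2 ≤ t * C' (φs+t) := by
        have hy' : s / 2 < C' (φs + t) := hy
        nlinarith [ht.1]
      exact h3.trans (h4.le.trans h5)
  choose ω hω1 hω2 hω3 using main
  refine ⟨φs, hφsZ, ω, hω1, ?_, ?_⟩
  · apply squeeze_zero (fun n => (hω1 n).le) hω2
    exact tendsto_one_div_add_atTop_nhds_zero_nat
  · exact tendsto_atTop_mono hω3 tendsto_natCast_atTop_atTop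
end

section
/- Let C : ℝ → ℝ be Lipschitz, non-decreasing, with C(y)−C(x) = ∫ₓ^y C'(t)dt and C' > 0 a.e. near 0, and suppose C'(ω) = o(ω^{α−2}) as ω ↓ 0 for every α ≥ 2. Then limsup over differentiability points ω ↓ 0 of ω·C'(ω)/(C(ω) − C(0)) equals +∞. -/
open Filter Topology MeasureTheory Set

private lemma quarter_aux (u P M : ℝ) (hu : u ≠ 0) (hM : 0 < M) :
    (u - u / (1 + 1/(2*M))) * (M * P / (u / (1 + 1/(2*M)))) = P / 2 := by
  have h1 : (0:ℝ) < 1 + 1/(2*M) := by positivity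
  have hM' : M ≠ 0 := ne_of_gt hM
  field_simp
  ring

set_option maxHeartbeats 1000000 in
/-- Let `C : ℝ → ℝ` be Lipschitz and non-decreasing with
`C y − C x = ∫ₓ^y C'`, suppose `C' > 0` a.e. near `0`, `C'` exists a.e. (with `D` the set of
differentiability points), and `C'(ω) = o(ω^{α−2})` as `ω ↓ 0` (along differentiability
points) for every `α ≥ 2`.  Then the limsup over differentiability points `ω ↓ 0` of
`ω · C'(ω) / (C(ω) − C(0))` equals `+∞`. -/
theorem statement15
    (C C' : ℝ → ℝ) (K : NNReal) (hlip : LipschitzWith K C) (hmono : Monotone C)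
    (hmeas : Measurable C')
    (hFTC : ∀ x y : ℝ, C y - C x = ∫ t in x..y, C' t)
    (D : Set ℝ) (hD : D = {x : ℝ | HasDerivAt C (C' x) x})
    (hDfull : ∀ᵐ x : ℝ, x ∈ D)
    (hpos : ∃ δ > (0 : ℝ), ∀ᵐ x : ℝ, x ∈ Ioo 0 δ → 0 < C' x)
    (hsmall : ∀ α : ℝ, 2 ≤ α →
      Tendsto (fun ω : ℝ => C' ω / ω ^ (α - 2)) (𝓝[Ioi 0 ∩ D] (0 : ℝ)) (𝓝 0)) :
    Filter.limsup (fun ω : ℝ => ((ω * C' ω / (C ω - C 0) : ℝ) : EReal))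
      (𝓝[Ioi 0 ∩ D] (0 : ℝ)) = ⊤ := by
  -- abbreviation
  set F : ℝ → ℝ := fun ω => C ω - C 0 with hFdef
  -- extraction of eventual statements on the filter into a δ-form
  have extract : ∀ {p : ℝ → Prop}, (∀ᶠ ω in 𝓝[Ioi 0 ∩ D] (0:ℝ), p ω) →
      ∃ δ > (0:ℝ), ∀ ω, ω ∈ D → 0 < ω → ω < δ → p ω := by
    intro p hp
    rw [eventually_nhdsWithin_iff, Metric.eventually_nhds_iff] at hp
    obtain ⟨δ, hδ, h⟩ := hp
    refine ⟨δ, hδ, fun ω hωD hω0 hωδ => h ?_ ⟨hω0, hωD⟩⟩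
    rw [Real.dist_eq, sub_zero, abs_of_pos hω0]; exact hωδ
  -- derivative bounds on D
  have hC'mem : ∀ x ∈ D, C' x ∈ Icc (0:ℝ) K := by
    intro x hx
    rw [hD] at hx
    have hslope : Tendsto (slope C x) (𝓝[≠] x) (𝓝 (C' x)) :=
      hasDerivAt_iff_tendsto_slope.1 hx
    constructor
    · refine ge_of_tendsto hslope ?_
      filter_upwards [self_mem_nhdsWithin] with y hy
      have hy' : y ≠ x := hy
      rw [slope_def_field]
      rcases lt_or_gt_of_ne hy' with h | h
      · exact div_nonneg_iff.2 (Or.inr ⟨by simpa using hmono h.le, by linarith⟩)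
      · exact div_nonneg (by simpa using hmono h.le) (by linarith)
    · refine le_of_tendsto hslope ?_
      filter_upwards [self_mem_nhdsWithin] with y hy
      have hy' : y ≠ x := hy
      have habs : |C y - C x| ≤ K * |y - x| := by
        have := hlip.dist_le_mul y x
        rwa [Real.dist_eq, Real.dist_eq] at this
      rw [slope_def_field]
      refine le_trans (le_abs_self _) ?_
      rw [abs_div]
      rw [div_le_iff₀ (abs_pos.2 (sub_ne_zero.2 hy'))]
      exact habs
  have haenn : ∀ᵐ x : ℝ, 0 ≤ C' x := hDfull.mono fun x hx => (hC'mem x hx).1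
  have haebd : ∀ᵐ x : ℝ, ‖C' x‖ ≤ (K : ℝ) := by
    filter_upwards [hDfull] with x hx
    rw [Real.norm_eq_abs, abs_of_nonneg (hC'mem x hx).1]
    exact (hC'mem x hx).2
  -- interval integrability of C'
  have hint : ∀ a b : ℝ, IntervalIntegrable C' volume a b := by
    intro a b
    rw [intervalIntegrable_iff]
    exact Integrable.mono' ((integrableOn_const_iff (C := (K:ℝ))).2 (Or.inr measure_Ioc_lt_top))
      hmeas.aestronglyMeasurable.restrict (ae_restrict_of_ae haebd)
  -- positivity of F on (0,∞)
  obtain ⟨δp, hδp, hppos⟩ := hpos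
  have hFTC' : ∀ x y : ℝ, F y - F x = ∫ t in x..y, C' t := by
    intro x y
    have := hFTC x y
    simp only [hFdef]; linarith [hFTC x y]
  have hF0 : F 0 = 0 := by simp [hFdef]
  have hFmono : Monotone F := fun x y hxy => by
    simp only [hFdef]; exact sub_le_sub_right (hmono hxy) _
  have hFnonneg : ∀ ω : ℝ, 0 ≤ ω → 0 ≤ F ω := fun ω hω => hF0 ▸ hFmono hω
  have hFpos : ∀ ω : ℝ, 0 < ω → 0 < F ω := by
    intro ω hω
    set m := min ω δp with hm
    have hm0 : 0 < m := lt_min hω hδp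
    have h1 : 0 < F m := by
      have hFm : F m = ∫ t in (0:ℝ)..m, C' t := by
        have := hFTC' 0 m; rwa [hF0, sub_zero] at this
      rw [hFm]
      rw [intervalIntegral.integral_pos_iff_support_of_nonneg_ae'
        (ae_restrict_of_ae haenn) (hint 0 m)]
      refine ⟨hm0, ?_⟩
      have hsub : (Ioo (0:ℝ) m : Set ℝ) ≤ᶠ[ae volume] ((Function.support C' ∩ Ioc 0 m : Set ℝ)) := by
        filter_upwards [hppos] with x hx hxm
        have hx' : x ∈ Ioo (0:ℝ) δp := ⟨hxm.1, lt_of_lt_of_le hxm.2 (min_le_right _ _)⟩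
        exact ⟨(hx hx').ne', ⟨hxm.1, hxm.2.le⟩⟩
      calc (0:ENNReal) < volume (Ioo (0:ℝ) m) := by
            rw [Real.volume_Ioo]; simpa using hm0
        _ ≤ _ := measure_mono_ae hsub
    exact lt_of_lt_of_le h1 (hFmono (min_le_left _ _))
  -- suppose limsup < ⊤
  by_contra htop
  have hlt : Filter.limsup (fun ω : ℝ => ((ω * C' ω / F ω : ℝ) : EReal))
      (𝓝[Ioi 0 ∩ D] (0 : ℝ)) < ⊤ := Ne.lt_top htop
  obtain ⟨b, hb1, hb2⟩ := exists_between hlt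
  have hbbot : b ≠ ⊥ := by rintro rfl; exact not_lt_bot hb1
  lift b to ℝ using ⟨hb2.ne, hbbot⟩
  have hev : ∀ᶠ ω in 𝓝[Ioi 0 ∩ D] (0:ℝ),
      ((ω * C' ω / F ω : ℝ) : EReal) < (b : EReal) := eventually_lt_of_limsup_lt hb1
  set M : ℝ := max b 1 with hMdef
  have hM1 : (1:ℝ) ≤ M := le_max_right _ _
  have hM0 : (0:ℝ) < M := lt_of_lt_of_le one_pos hM1
  obtain ⟨δM, hδM, hbound⟩ := extract (hev.mono (fun ω hω => hω))
  -- key pointwise inequality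
  have hkey : ∀ ω, ω ∈ D → 0 < ω → ω < δM → C' ω ≤ M * F ω / ω := by
    intro ω hωD hω0 hωδ
    have h1 : ((ω * C' ω / F ω : ℝ) : EReal) < (b : EReal) := hbound ω hωD hω0 hωδ
    have h2 : ω * C' ω / F ω ≤ M := le_trans (EReal.coe_lt_coe_iff.1 h1).le (le_max_left _ _)
    have hFp := hFpos ω hω0
    rw [div_le_iff₀ hFp] at h2
    rw [le_div_iff₀ hω0]
    calc C' ω * ω = ω * C' ω := by ring
      _ ≤ M * F ω := h2
  have haekey : ∀ᵐ t : ℝ, t ∈ Ioo 0 δM → C' t ≤ M * F t / t := by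
    filter_upwards [hDfull] with t htD ht
    exact hkey t htD ht.1 ht.2
  -- the geometric sequence
  set r : ℝ := 1 + 1 / (2 * M) with hrdef
  have hr1 : 1 < r := by
    rw [hrdef]; have : 0 < 1 / (2 * M) := by positivity
    linarith
  have hr0 : 0 < r := lt_trans one_pos hr1
  set δ₀ : ℝ := δM / 2 with hδ₀def
  have hδ₀ : 0 < δ₀ := by positivity
  have hδ₀M : δ₀ < δM := by rw [hδ₀def]; linarith
  set a : ℕ → ℝ := fun n => δ₀ / r ^ n with hadef
  have ha0 : ∀ n, 0 < a n := fun n => by positivity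
  have hrpow : ∀ n : ℕ, (1:ℝ) ≤ r ^ n := by
    intro n
    calc (1:ℝ) = 1 ^ n := (one_pow n).symm
      _ ≤ r ^ n := pow_le_pow_left₀ zero_le_one hr1.le n
  have haδ : ∀ n, a n ≤ δ₀ := fun n => div_le_self hδ₀.le (hrpow n)
  have hastep : ∀ n, a (n+1) = a n / r := by
    intro n; rw [hadef]; simp only [pow_succ]; field_simp
  -- main inductive lower bound
  have hlow : ∀ n : ℕ, F δ₀ / 2 ^ n ≤ F (a n) := by
    intro n
    induction n with
    | zero => simp [hadef]
    | succ n ih =>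
      set u := a n with hu
      set v := a (n+1) with hv
      have hv0 : 0 < v := ha0 (n+1)
      have hvu : v < u := by
        rw [hv, hastep n, div_lt_iff₀ hr0]
        nlinarith [ha0 n]
      have huδ : u < δM := lt_of_le_of_lt (haδ n) hδ₀M
      -- integral bound
      have hcb : ∀ᵐ t : ℝ, t ∈ Icc v u → C' t ≤ M * F u / v := by
        filter_upwards [haekey] with t ht htvu
        have ht0 : 0 < t := lt_of_lt_of_le hv0 htvu.1
        have htδ : t < δM := lt_of_le_of_lt htvu.2 huδ
        refine le_trans (ht ⟨ht0, htδ⟩) ?_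
        apply div_le_div₀ (mul_nonneg hM0.le (hFnonneg u (ha0 n).le))
          (mul_le_mul_of_nonneg_left (hFmono htvu.2) hM0.le) hv0 htvu.1
      have hIb : F u - F v ≤ (u - v) * (M * F u / v) := by
        rw [hFTC' v u]
        calc (∫ t in v..u, C' t) ≤ ∫ _t in v..u, (M * F u / v) :=
              intervalIntegral.integral_mono_ae_restrict hvu.le (hint v u)
                intervalIntegrable_const
                ((ae_restrict_iff' measurableSet_Icc).2 hcb)
          _ = (u - v) * (M * F u / v) := by
              rw [intervalIntegral.integral_const, smul_eq_mul]
      have hval : (u - v) * (M * F u / v) = F u / 2 := by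
        have hvr : v = u / r := by rw [hv, hastep n, hu]
        rw [hvr, hrdef]
        exact quarter_aux u (F u) M (ha0 n).ne' hM0
      rw [hval] at hIb
      have : F u / 2 ≤ F v := by linarith
      calc F δ₀ / 2 ^ (n+1) = (F δ₀ / 2 ^ n) / 2 := by ring
        _ ≤ F u / 2 := by linarith
        _ ≤ F v := this
  -- upper bound: choose k with r^(k+1) ≥ 4
  obtain ⟨k, hk⟩ := pow_unbounded_of_one_lt (4:ℝ) hr1
  have hrk : (4:ℝ) ≤ r ^ (k+1) := by
    calc (4:ℝ) ≤ r ^ k := hk.le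
      _ ≤ r ^ (k+1) := pow_le_pow_right₀ hr1.le (Nat.le_succ k)
  have hsm := hsmall ((k:ℝ) + 2) (by linarith [Nat.cast_nonneg (α := ℝ) k])
  have hsm' : Tendsto (fun ω : ℝ => C' ω / ω ^ (k:ℕ)) (𝓝[Ioi 0 ∩ D] (0:ℝ)) (𝓝 0) := by
    have heq : ∀ᶠ ω in 𝓝[Ioi 0 ∩ D] (0:ℝ),
        C' ω / ω ^ ((k:ℝ) + 2 - 2) = C' ω / ω ^ (k:ℕ) := by
      rw [eventually_nhdsWithin_iff]
      filter_upwards with ω _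
      norm_num [Real.rpow_natCast]
    exact Tendsto.congr' heq hsm
  obtain ⟨δ₂, hδ₂, hub⟩ := extract (hsm'.eventually_lt_const one_pos)
  have hub' : ∀ ω, ω ∈ D → 0 < ω → ω < δ₂ → C' ω ≤ ω ^ (k:ℕ) := by
    intro ω hωD hω0 hωδ
    have h := hub ω hωD hω0 hωδ
    have hp : (0:ℝ) < ω ^ (k:ℕ) := by positivity
    rw [div_lt_one hp] at h
    exact h.le
  have haeub : ∀ᵐ t : ℝ, t ∈ Ioo 0 δ₂ → C' t ≤ t ^ (k:ℕ) := by
    filter_upwards [hDfull] with t htD ht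
    exact hub' t htD ht.1 ht.2
  have hne0 : ∀ᵐ t : ℝ, t ≠ (0:ℝ) := by
    rw [ae_iff]
    have : {t : ℝ | ¬ t ≠ 0} = {(0:ℝ)} := by ext t; simp
    rw [this]; exact measure_singleton 0
  have hFub : ∀ ω : ℝ, 0 < ω → ω < δ₂ → F ω ≤ ω ^ (k+1) := by
    intro ω hω0 hωδ
    have hFω : F ω = ∫ t in (0:ℝ)..ω, C' t := by
      have := hFTC' 0 ω; rwa [hF0, sub_zero] at this
    have hcb : ∀ᵐ t : ℝ, t ∈ Icc 0 ω → C' t ≤ ω ^ (k:ℕ) := by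
      filter_upwards [haeub, hne0] with t ht htne ht0ω
      have ht0 : 0 < t := lt_of_le_of_ne ht0ω.1 (Ne.symm htne)
      refine le_trans (ht ⟨ht0, lt_of_le_of_lt ht0ω.2 hωδ⟩) ?_
      exact pow_le_pow_left₀ ht0.le ht0ω.2 k
    calc F ω = ∫ t in (0:ℝ)..ω, C' t := hFω
      _ ≤ ∫ _t in (0:ℝ)..ω, (ω ^ (k:ℕ)) :=
          intervalIntegral.integral_mono_ae_restrict hω0.le (hint 0 ω)
            intervalIntegrable_const ((ae_restrict_iff' measurableSet_Icc).2 hcb)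
      _ = ω * ω ^ (k:ℕ) := by rw [intervalIntegral.integral_const, smul_eq_mul, sub_zero]
      _ = ω ^ (k+1) := by ring
  -- choose n large
  obtain ⟨n₁, hn₁⟩ := pow_unbounded_of_one_lt (δ₀ / δ₂) hr1
  obtain ⟨n₂, hn₂⟩ := pow_unbounded_of_one_lt (δ₀ ^ (k+1) / F δ₀) (one_lt_two (α := ℝ))
  set n := n₁ + n₂ with hndef
  have hrn : δ₀ / δ₂ < r ^ n := lt_of_lt_of_le hn₁ (pow_le_pow_right₀ hr1.le (Nat.le_add_right _ _))
  have h2n : δ₀ ^ (k+1) / F δ₀ < 2 ^ n :=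
    lt_of_lt_of_le hn₂ (pow_le_pow_right₀ one_le_two (Nat.le_add_left _ _))
  have hanδ₂ : a n < δ₂ := by
    rw [hadef]
    simp only
    rw [div_lt_iff₀ (by positivity)]
    rw [div_lt_iff₀ hδ₂] at hrn
    linarith [hrn]
  -- final contradiction
  have hlow' := hlow n
  have hup' := hFub (a n) (ha0 n) hanδ₂
  have han : a n ^ (k+1) = δ₀ ^ (k+1) / (r ^ (k+1)) ^ n := by
    rw [hadef]
    simp only
    rw [div_pow, ← pow_mul, ← pow_mul, Nat.mul_comm]
  have h4 : (r ^ (k+1)) ^ n ≥ 4 ^ n := pow_le_pow_left₀ (by norm_num) hrk n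
  have hFδ₀ := hFpos δ₀ hδ₀
  have hchain : F δ₀ / 2 ^ n ≤ δ₀ ^ (k+1) / 4 ^ n := by
    calc F δ₀ / 2 ^ n ≤ F (a n) := hlow'
      _ ≤ a n ^ (k+1) := hup'
      _ = δ₀ ^ (k+1) / (r ^ (k+1)) ^ n := han
      _ ≤ δ₀ ^ (k+1) / 4 ^ n := by
          apply div_le_div_of_nonneg_left (by positivity) (by positivity) h4
  -- but δ₀^(k+1)/2^n < F δ₀ , and 4^n = 2^n * 2^n
  have h4n : (4:ℝ) ^ n = 2 ^ n * 2 ^ n := by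
    rw [← mul_pow]; norm_num
  rw [h4n] at hchain
  have h2npos : (0:ℝ) < 2 ^ n := by positivity
  rw [div_le_div_iff₀ h2npos (by positivity)] at hchain
  -- hchain : F δ₀ * (2^n * 2^n) ≤ δ₀^(k+1) * 2^n
  have : F δ₀ * 2 ^ n ≤ δ₀ ^ (k+1) := by
    nlinarith [h2npos]
  rw [div_lt_iff₀ hFδ₀] at h2n
  nlinarith [h2npos, hFδ₀]
end
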